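/- arXiv:2604.03990 — 3 statements merged into one kernel-verified Lean document; each statement's English description precedes it below -/
import Mathlib

section
/- For a pure state $|\psi\rangle \in \mathbb{C}^d$ (unit vector, density matrix $\rho = |\psi\rangle\langle\psi|$), if $\{M_i\}_{i=1}^{d+1}$ is a complete set of mutually unbiased bases, then summing the probability distributions over all bases gives $\sum_{i=1}^{d+1} \sum_{k=1}^{d} p^{(i)}_k{}^2 = \sum_{i=1}^{d+1}\sum_k |\langle \psi^i_k | \psi\rangle|^4 \le 2$, where $p^{(i)}_k = |\langle\psi^i_k|\psi\rangle|^2$. More generally, for any density matrix $\rho$, $\sum_{i=1}^{d+1}\sum_k \langle\psi^i_k|\rho|\psi^i_k\rangle^2 = \mathrm{tr}(\rho^2) + 1$. -/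
open scoped BigOperators ComplexOrder

/-- Hermitian inner product on `Fin n → ℂ`. -/
noncomputable def inn {n : ℕ} (u v : Fin n → ℂ) : ℂ :=
  ∑ i, (starRingEnd ℂ) (u i) * v i

/-!
Let `P i k` be the rank-one projector onto the `k`-th vector of the `i`-th basis. Mutual
unbiasedness says `tr (P i k * P j l) = δᵢⱼ δₖₗ + (1 - δᵢⱼ) / d`, and each basis resolves the
identity, so `∑ i k, tr (P i k * P j l) • P i k = P j l + 1`: the maps
`σ ↦ ∑ i k, tr (P i k * σ) • P i k` and `σ ↦ σ + tr σ • 1` agree on every projector. The projectors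
span all `d × d` matrices, because the `1 + (d + 1)(d - 1) = d²` matrices `1` and
`P i k - P i k₀` (`k ≠ k₀`) are linearly independent, as taking traces against the projectors
shows; this is where completeness (`d + 1` bases) enters. Multiplying the resulting frame identity
by `σ` and taking traces gives `∑ i k, tr (P i k * σ) ^ 2 = tr (σ * σ) + (tr σ) ^ 2`, and for
Hermitian `ρ` the traces `tr (P i k * ρ)` are the real probabilities `p i k`.
-/

open Matrix

namespace MUB

variable {n : ℕ}

theorem inn_eq_star_dotProduct (u v : Fin n → ℂ) : inn u v = star u ⬝ᵥ v := rfl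

theorem inn_self (u : Fin n → ℂ) : inn u u = ((∑ a, ‖u a‖ ^ 2 : ℝ) : ℂ) := by
  push_cast
  simp [inn, Complex.conj_mul']

theorem star_inn (u v : Fin n → ℂ) : star (inn u v) = inn v u := by
  rw [inn_eq_star_dotProduct, star_dotProduct, star_star, inn_eq_star_dotProduct]

noncomputable def proj (u : Fin n → ℂ) : Matrix (Fin n) (Fin n) ℂ := vecMulVec u (star u)

theorem trace_proj_mul (u : Fin n → ℂ) (σ : Matrix (Fin n) (Fin n) ℂ) :
    (proj u * σ).trace = star u ⬝ᵥ σ *ᵥ u := by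
  rw [proj, vecMulVec_mul, trace_vecMulVec, dotProduct_comm, dotProduct_mulVec]

theorem star_dotProduct_mulVec_eq_sum (u : Fin n → ℂ) (σ : Matrix (Fin n) (Fin n) ℂ) :
    star u ⬝ᵥ σ *ᵥ u = ∑ a, ∑ b, (starRingEnd ℂ) (u a) * σ a b * u b := by
  simp [dotProduct, mulVec, Finset.mul_sum, mul_assoc]

theorem trace_proj_mul_of_isHermitian {σ : Matrix (Fin n) (Fin n) ℂ} (hσ : σ.IsHermitian)
    (u : Fin n → ℂ) : (proj u * σ).trace = ((star u ⬝ᵥ σ *ᵥ u).re : ℂ) := by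
  rw [trace_proj_mul]
  exact Complex.ext rfl (hσ.im_star_dotProduct_mulVec_self u)

theorem trace_proj (u : Fin n → ℂ) : (proj u).trace = inn u u := by
  rw [proj, trace_vecMulVec, dotProduct_comm, inn_eq_star_dotProduct]

theorem trace_proj_mul_proj (u v : Fin n → ℂ) :
    (proj u * proj v).trace = ((‖inn u v‖ ^ 2 : ℝ) : ℂ) := by
  rw [proj, proj, vecMulVec_mul_vecMulVec, trace_vecMulVec, dotProduct_smul, smul_eq_mul,
    dotProduct_comm u, ← inn_eq_star_dotProduct, ← inn_eq_star_dotProduct, ← star_inn u v,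
    RCLike.star_def, Complex.mul_conj', Complex.ofReal_pow]

theorem sum_proj_eq_one {b : Fin n → Fin n → ℂ}
    (hb : ∀ j k, inn (b j) (b k) = if j = k then 1 else 0) : ∑ k, proj (b k) = 1 := by
  set M : Matrix (Fin n) (Fin n) ℂ := of fun a k => b k a
  have hM : Mᴴ * M = 1 := by
    ext j k
    simpa [M, mul_apply, one_apply, inn] using hb j k
  rw [← mul_eq_one_comm.mp hM]
  ext a c
  simp [M, proj, mul_apply, Matrix.sum_apply, vecMulVec_apply]

variable {ι : Type*}

structure IsMUB (B : ι → Fin n → Fin n → ℂ) : Prop where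
  orthonormal : ∀ i, ∀ j k, inn (B i j) (B i k) = if j = k then 1 else 0
  unbiased : ∀ i j, i ≠ j → ∀ k l, ‖inn (B i k) (B j l)‖ ^ 2 = 1 / n

noncomputable def spanningFamily (B : ι → Fin n → Fin n → ℂ) (k₀ : Fin n) :
    Option (ι × {k // k ≠ k₀}) → Matrix (Fin n) (Fin n) ℂ
  | none => 1
  | some (i, k) => proj (B i k) - proj (B i k₀)

namespace IsMUB

variable {B : ι → Fin n → Fin n → ℂ}

theorem trace_proj (hB : IsMUB B) (i : ι) (k : Fin n) : (proj (B i k)).trace = 1 := by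
  rw [MUB.trace_proj, hB.orthonormal, if_pos rfl]

theorem trace_proj_mul_proj [DecidableEq ι] (hB : IsMUB B) (i : ι) (k : Fin n) (j : ι)
    (l : Fin n) :
    (proj (B i k) * proj (B j l)).trace =
      if i = j then (if k = l then 1 else 0) else (n : ℂ)⁻¹ := by
  rw [MUB.trace_proj_mul_proj]
  split_ifs with hij hkl
  · subst hij hkl
    simp [hB.orthonormal]
  · subst hij
    simp [hB.orthonormal, hkl]
  · simp [hB.unbiased i j hij]

theorem sum_trace_proj_mul_proj_smul [DecidableEq ι] (hB : IsMUB B) (i j : ι) (l : Fin n) :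
    ∑ k, (proj (B i k) * proj (B j l)).trace • proj (B i k) =
      if i = j then proj (B j l) else (n : ℂ)⁻¹ • 1 := by
  simp_rw [hB.trace_proj_mul_proj]
  split_ifs with hij
  · subst hij
    simp
  · rw [← Finset.smul_sum, sum_proj_eq_one (hB.orthonormal i)]

theorem sum_sum_trace_proj_mul_proj_smul {B : Fin (n + 1) → Fin n → Fin n → ℂ} (hB : IsMUB B)
    (hn : 0 < n) (j : Fin (n + 1)) (l : Fin n) :
    ∑ i, ∑ k, (proj (B i k) * proj (B j l)).trace • proj (B i k) = proj (B j l) + 1 := by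
  simp_rw [hB.sum_trace_proj_mul_proj_smul]
  rw [Finset.sum_ite, Finset.filter_eq', Finset.filter_ne', if_pos (Finset.mem_univ j),
    Finset.sum_singleton, Finset.sum_const, Finset.card_erase_of_mem (Finset.mem_univ j),
    Finset.card_univ, Fintype.card_fin, add_tsub_cancel_right, ← Nat.cast_smul_eq_nsmul ℂ,
    smul_smul, mul_inv_cancel₀ (by exact_mod_cast hn.ne'), one_smul]

theorem trace_proj_sub_proj_mul_proj [DecidableEq ι] (hB : IsMUB B) (i : ι) (k k₀ : Fin n)
    (j : ι) (l : Fin n) :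
    ((proj (B i k) - proj (B i k₀)) * proj (B j l)).trace =
      if i = j then (if k = l then 1 else 0) - (if k₀ = l then 1 else 0) else 0 := by
  rw [Matrix.sub_mul, trace_sub, hB.trace_proj_mul_proj, hB.trace_proj_mul_proj]
  split_ifs <;> simp

theorem linearIndependent_spanningFamily [Fintype ι] [DecidableEq ι] (hB : IsMUB B) (hn : 0 < n)
    (k₀ : Fin n) : LinearIndependent ℂ (spanningFamily B k₀) := by
  rw [Fintype.linearIndependent_iff]
  intro g hg
  have hnone : g none = 0 := by
    simpa [Fintype.sum_option, spanningFamily, hB.trace_proj, hn.ne'] using congrArg trace hg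
  have hsome : ∀ j k, g (some (j, k)) = 0 := fun j k => by
    simpa [Fintype.sum_option, spanningFamily, Finset.sum_mul, trace_sum,
      hB.trace_proj_sub_proj_mul_proj, hnone, k.2.symm, Subtype.val_inj, Fintype.sum_prod_type]
      using congrArg (fun σ => (σ * proj (B j k)).trace) hg
  rintro (_ | ⟨j, k⟩)
  · exact hnone
  · exact hsome j k

theorem span_proj_eq_top {B : Fin (n + 1) → Fin n → Fin n → ℂ} (hB : IsMUB B) (hn : 0 < n) :
    Submodule.span ℂ (Set.range fun ik : Fin (n + 1) × Fin n => proj (B ik.1 ik.2)) = ⊤ := by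
  set k₀ : Fin n := ⟨0, hn⟩
  have hcard : Fintype.card (Option (Fin (n + 1) × {k // k ≠ k₀})) =
      Module.finrank ℂ (Matrix (Fin n) (Fin n) ℂ) := by
    obtain ⟨m, rfl⟩ := Nat.exists_eq_succ_of_ne_zero hn.ne'
    simp [Module.finrank_matrix]
    ring
  have hone : (1 : Matrix (Fin n) (Fin n) ℂ) ∈
      Submodule.span ℂ (Set.range fun ik : Fin (n + 1) × Fin n => proj (B ik.1 ik.2)) := by
    rw [← sum_proj_eq_one (hB.orthonormal 0)]
    exact Submodule.sum_mem _ fun k _ => Submodule.subset_span ⟨(0, k), rfl⟩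
  rw [eq_top_iff, ← (hB.linearIndependent_spanningFamily hn k₀).span_eq_top_of_card_eq_finrank
    hcard, Submodule.span_le]
  rintro _ ⟨_ | ⟨i, k⟩, rfl⟩
  · exact hone
  · exact Submodule.sub_mem _ (Submodule.subset_span ⟨(i, k), rfl⟩)
      (Submodule.subset_span ⟨(i, k₀), rfl⟩)

theorem sum_sum_trace_proj_mul_smul {B : Fin (n + 1) → Fin n → Fin n → ℂ} (hB : IsMUB B)
    (hn : 0 < n) (σ : Matrix (Fin n) (Fin n) ℂ) :
    ∑ i, ∑ k, (proj (B i k) * σ).trace • proj (B i k) = σ + σ.trace • 1 := by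
  have hσ : σ ∈ Submodule.span ℂ
      (Set.range fun ik : Fin (n + 1) × Fin n => proj (B ik.1 ik.2)) := by
    rw [hB.span_proj_eq_top hn]
    exact Submodule.mem_top
  induction hσ using Submodule.span_induction with
  | mem _ h =>
    obtain ⟨⟨j, l⟩, rfl⟩ := h
    rw [hB.sum_sum_trace_proj_mul_proj_smul hn, hB.trace_proj, one_smul]
  | zero => simp
  | add σ τ _ _ hσ hτ =>
    simp only [Matrix.mul_add, trace_add, add_smul, Finset.sum_add_distrib, hσ, hτ]
    abel
  | smul c σ _ hσ =>
    simp only [Matrix.mul_smul, trace_smul, smul_eq_mul, ← smul_smul, ← Finset.smul_sum, hσ,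
      smul_add]

theorem sum_sum_trace_proj_mul_sq {B : Fin (n + 1) → Fin n → Fin n → ℂ} (hB : IsMUB B)
    (hn : 0 < n) (σ : Matrix (Fin n) (Fin n) ℂ) :
    ∑ i, ∑ k, (proj (B i k) * σ).trace ^ 2 = (σ * σ).trace + σ.trace ^ 2 := by
  simpa [Finset.sum_mul, trace_sum, sq, add_mul]
    using congrArg (fun τ => (τ * σ).trace) (hB.sum_sum_trace_proj_mul_smul hn σ)

end IsMUB

end MUB

open MUB in
/-- Index-of-coincidence identity for a complete set of d+1 MUBs: for any
density matrix ρ, ∑_{i,k} ⟨ψᵢₖ|ρ|ψᵢₖ⟩² = tr(ρ²) + 1; in particular for a pure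
state the sum is at most 2. -/
theorem cmub_index_of_coincidence (d : ℕ) (hd : 0 < d)
    (B : Fin (d + 1) → Fin d → Fin d → ℂ)
    (hON : ∀ i, ∀ j k, inn (B i j) (B i k) = if j = k then 1 else 0)
    (hMUB : ∀ i j, i ≠ j → ∀ k l,
      ‖inn (B i k) (B j l)‖ ^ 2 = 1 / d)
    (ρ : Matrix (Fin d) (Fin d) ℂ) (hρ : ρ.PosSemidef) (htr : ρ.trace = 1)
    (p : Fin (d + 1) → Fin d → ℝ)
    (hp : ∀ i k, p i k =
      (∑ a, ∑ b, (starRingEnd ℂ) (B i k a) * ρ a b * B i k b).re) :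
    (∑ i, ∑ k, (p i k) ^ 2) = ((ρ * ρ).trace).re + 1 ∧
    ((∃ ψ : Fin d → ℂ, (∑ a, ‖ψ a‖ ^ 2 = 1) ∧
        ρ = Matrix.vecMulVec ψ (fun a => (starRingEnd ℂ) (ψ a))) →
      (∑ i, ∑ k, (p i k) ^ 2) ≤ 2) := by
  have hB : IsMUB B := ⟨hON, hMUB⟩
  have hprob : ∀ i k, (proj (B i k) * ρ).trace = p i k := fun i k => by
    rw [trace_proj_mul_of_isHermitian hρ.isHermitian, hp, star_dotProduct_mulVec_eq_sum]
  have hsum : ∑ i, ∑ k, p i k ^ 2 = (ρ * ρ).trace.re + 1 := by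
    simpa [hprob, htr, ← Complex.ofReal_pow] using
      congrArg Complex.re (hB.sum_sum_trace_proj_mul_sq hd ρ)
  refine ⟨hsum, ?_⟩
  rintro ⟨ψ, hψ, rfl⟩
  have hpure : (proj ψ * proj ψ).trace = 1 := by
    rw [trace_proj_mul_proj, inn_self, hψ]
    simp
  rw [hsum]
  change (proj ψ * proj ψ).trace.re + 1 ≤ 2
  norm_num [hpure]
end

section
/- Let $p = (p_1, \dots, p_d)$ be a probability distribution. Then the Shannon entropy satisfies $H(p) \ge -\log_2 \sum_k p_k^2$ (Rényi-2 bounds Shannon from below), and consequently for a complete set of $d+1$ MUBs measured on state $\rho$, $\sum_{i=1}^{d+1} H(M_i) \ge -(d+1)\log_2\frac{\mathrm{tr}(\rho^2)+1}{d+1}$ follows from concavity of $-\log_2$ and the identity $\sum_{i,k}(p^{(i)}_k)^2 = \mathrm{tr}(\rho^2)+1$. -/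
/-!
Shannon entropy dominates collision entropy: with `s = ∑ₖ qₖ²`, the inequality `log x ≤ x - 1`
at `x = qₖ / s`, weighted by `qₖ`, gives `∑ₖ qₖ log qₖ ≤ log s`. Summing over the bases and using
concavity of `log` once more, the entropic bound reduces to `∑ᵢₖ pᵢₖ² ≤ tr ρ² + 1`.

For that, the dephased states `Dᵢ = ∑ₖ pᵢₖ |bᵢₖ⟩⟨bᵢₖ|` satisfy `tr (ρ Dᵢ) = tr (Dᵢ²) = ∑ₖ pᵢₖ²`,
and mutual unbiasedness makes the traceless parts `Dᵢ - 1/d` pairwise orthogonal for the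
Hilbert–Schmidt inner product. Bessel's inequality for `ρ - 1/d` against them reads
`∑ᵢ (∑ₖ pᵢₖ² - 1/d) ≤ tr ρ² - 1/d`.
-/

open scoped BigOperators ComplexOrder

open Finset Matrix Real

noncomputable def shannonEntropy {ι : Type*} [Fintype ι] (q : ι → ℝ) : ℝ :=
  -∑ k, q k * logb 2 (q k)

noncomputable def collisionEntropy {ι : Type*} [Fintype ι] (q : ι → ℝ) : ℝ :=
  -logb 2 (∑ k, q k ^ 2)

section Entropy

variable {ι κ : Type*} [Fintype ι] [Fintype κ]

lemma sum_sq_pos_of_sum_eq_one {q : ι → ℝ} (h1 : ∑ k, q k = 1) : 0 < ∑ k, q k ^ 2 := by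
  have h := sq_sum_le_card_mul_sum_sq (s := univ) (f := q)
  rw [h1, one_pow] at h
  exact pos_of_mul_pos_right (one_pos.trans_le h) (Nat.cast_nonneg _)

lemma Real.mul_log_le_mul_log_add {x s : ℝ} (hx : 0 ≤ x) (hs : 0 < s) :
    x * log x ≤ x * log s + x * (x / s - 1) := by
  rcases hx.eq_or_lt with rfl | hx
  · simp
  have h := mul_le_mul_of_nonneg_left (log_le_sub_one_of_pos (div_pos hx hs)) hx.le
  rw [log_div hx.ne' hs.ne'] at h
  linarith

lemma sum_mul_log_le_log_sum_sq {q : ι → ℝ} (h0 : ∀ k, 0 ≤ q k) (h1 : ∑ k, q k = 1) :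
    ∑ k, q k * log (q k) ≤ log (∑ k, q k ^ 2) := by
  set s := ∑ k, q k ^ 2
  have hs : 0 < s := sum_sq_pos_of_sum_eq_one h1
  have hmean : ∑ k, q k * (q k / s - 1) = 0 := by
    simp_rw [mul_sub, mul_one, ← mul_div_assoc, ← sq]
    rw [sum_sub_distrib, ← sum_div, h1, div_self hs.ne', sub_self]
  calc ∑ k, q k * log (q k) ≤ ∑ k, (q k * log s + q k * (q k / s - 1)) :=
        sum_le_sum fun k _ => mul_log_le_mul_log_add (h0 k) hs
    _ = log s := by rw [sum_add_distrib, hmean, ← sum_mul, h1, one_mul, add_zero]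

theorem collisionEntropy_le_shannonEntropy {q : ι → ℝ} (h0 : ∀ k, 0 ≤ q k)
    (h1 : ∑ k, q k = 1) : collisionEntropy q ≤ shannonEntropy q := by
  simp only [collisionEntropy, shannonEntropy, logb, ← mul_div_assoc, ← sum_div]
  exact neg_le_neg (div_le_div_of_nonneg_right (sum_mul_log_le_log_sum_sq h0 h1)
    (log_pos one_lt_two).le)

lemma sum_log_le_card_mul_log_mean [Nonempty ι] {s : ι → ℝ} (hs : ∀ i, 0 < s i) :
    ∑ i, log (s i) ≤ Fintype.card ι * log ((∑ i, s i) / Fintype.card ι) := by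
  have hm : (0 : ℝ) < Fintype.card ι := Nat.cast_pos.mpr Fintype.card_pos
  have hw : ∑ _i : ι, (Fintype.card ι : ℝ)⁻¹ = 1 := by
    rw [sum_const, card_univ, nsmul_eq_mul, mul_inv_cancel₀ hm.ne']
  have h := strictConcaveOn_log_Ioi.concaveOn.le_map_sum (t := univ)
    (fun _ _ => inv_nonneg.mpr hm.le) hw fun i _ => hs i
  simp only [smul_eq_mul, inv_mul_eq_div, ← sum_div] at h
  calc ∑ i, log (s i) = Fintype.card ι * ((∑ i, log (s i)) / Fintype.card ι) := by
        field_simp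
    _ ≤ _ := mul_le_mul_of_nonneg_left h hm.le

theorem neg_card_mul_logb_mean_le_sum_shannonEntropy [Nonempty ι] {p : ι → κ → ℝ}
    (h0 : ∀ i k, 0 ≤ p i k) (h1 : ∀ i, ∑ k, p i k = 1) :
    -Fintype.card ι * logb 2 ((∑ i, ∑ k, p i k ^ 2) / Fintype.card ι) ≤
      ∑ i, shannonEntropy (p i) := by
  have hlog := sum_log_le_card_mul_log_mean fun i => sum_sq_pos_of_sum_eq_one (h1 i)
  calc -Fintype.card ι * logb 2 ((∑ i, ∑ k, p i k ^ 2) / Fintype.card ι)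
      ≤ ∑ i, collisionEntropy (p i) := by
        simp only [collisionEntropy, logb, sum_neg_distrib, ← sum_div, neg_mul, mul_div_assoc',
          neg_div]
        exact neg_le_neg (div_le_div_of_nonneg_right hlog (log_pos one_lt_two).le)
    _ ≤ ∑ i, shannonEntropy (p i) :=
        sum_le_sum fun i _ => collisionEntropy_le_shannonEntropy (h0 i) (h1 i)

end Entropy

section Dephasing

variable {n κ : Type*} [Fintype n] [Fintype κ]

lemma trace_mul_vecMulVec_star (M : Matrix n n ℂ) (v : n → ℂ) :
    (M * vecMulVec v (star v)).trace = star v ⬝ᵥ (M *ᵥ v) := by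
  rw [mul_vecMulVec, trace_vecMulVec, dotProduct_comm]

lemma trace_vecMulVec_star_mul_vecMulVec_star (u v : n → ℂ) :
    (vecMulVec u (star u) * vecMulVec v (star v)).trace = ((‖star u ⬝ᵥ v‖ ^ 2 : ℝ) : ℂ) := by
  rw [trace_mul_vecMulVec_star, vecMulVec_mulVec, dotProduct_smul, star_dotProduct]
  simp [Complex.mul_conj']

lemma sum_vecMulVec_star_eq_one [DecidableEq n] {b : n → n → ℂ}
    (hb : ∀ j k, star (b j) ⬝ᵥ b k = if j = k then 1 else 0) :
    ∑ k, vecMulVec (b k) (star (b k)) = 1 := by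
  set U : Matrix n n ℂ := (of b)ᵀ
  have hU : Uᴴ * U = 1 := by
    ext j k
    simpa [U, mul_apply, one_apply, dotProduct] using hb j k
  have hUU : U * Uᴴ = 1 := mul_eq_one_comm.mp hU
  ext a a'
  simpa [U, mul_apply, Matrix.sum_apply, vecMulVec_apply] using congr_fun (congr_fun hUU a) a'

lemma sum_star_dotProduct_mulVec_eq_trace [DecidableEq n] {b : n → n → ℂ}
    (hb : ∀ j k, star (b j) ⬝ᵥ b k = if j = k then 1 else 0) (M : Matrix n n ℂ) :
    ∑ k, star (b k) ⬝ᵥ (M *ᵥ b k) = M.trace := by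
  simp only [← trace_mul_vecMulVec_star, ← trace_sum, ← mul_sum, sum_vecMulVec_star_eq_one hb,
    mul_one]

lemma sum_eq_one_of_star_dotProduct_mulVec_eq [DecidableEq n] {b : n → n → ℂ}
    (hb : ∀ j k, star (b j) ⬝ᵥ b k = if j = k then 1 else 0) {ρ : Matrix n n ℂ}
    (htr : ρ.trace = 1) {q : n → ℝ} (hq : ∀ k, star (b k) ⬝ᵥ (ρ *ᵥ b k) = q k) :
    ∑ k, q k = 1 := by
  exact_mod_cast (sum_congr rfl fun k _ => (hq k).symm).trans
    ((sum_star_dotProduct_mulVec_eq_trace hb ρ).trans htr)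

/-- `∑ₖ qₖ |bₖ⟩⟨bₖ|`; for `qₖ = ⟨bₖ|ρ|bₖ⟩` this is `ρ` after a nonselective measurement in the
basis `b`. -/
noncomputable def dephased (b : κ → n → ℂ) (q : κ → ℝ) : Matrix n n ℂ :=
  ∑ k, q k • vecMulVec (b k) (star (b k))

lemma isHermitian_dephased (b : κ → n → ℂ) (q : κ → ℝ) : (dephased b q).IsHermitian :=
  isSelfAdjoint_sum _ fun k _ => ((posSemidef_vecMulVec_self_star (b k)).isHermitian.smul
    (IsSelfAdjoint.all (q k)))

lemma trace_dephased {b : κ → n → ℂ} (hb : ∀ k, star (b k) ⬝ᵥ b k = 1) (q : κ → ℝ) :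
    (dephased b q).trace = ((∑ k, q k : ℝ) : ℂ) := by
  simp [dephased, trace_sum, trace_vecMulVec, dotProduct_comm _ (star _), hb, Complex.real_smul]

lemma trace_mul_dephased (M : Matrix n n ℂ) (b : κ → n → ℂ) (q : κ → ℝ) :
    (M * dephased b q).trace = ∑ k, (q k : ℂ) * (star (b k) ⬝ᵥ (M *ᵥ b k)) := by
  simp [dephased, mul_sum, trace_sum, trace_mul_vecMulVec_star, Complex.real_smul]

lemma trace_dephased_mul_dephased (b b' : κ → n → ℂ) (q q' : κ → ℝ) :
    (dephased b q * dephased b' q').trace =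
      ((∑ k, ∑ l, q k * q' l * ‖star (b k) ⬝ᵥ b' l‖ ^ 2 : ℝ) : ℂ) := by
  simp only [dephased, sum_mul_sum, Matrix.smul_mul, Matrix.mul_smul, trace_sum, trace_smul,
    trace_vecMulVec_star_mul_vecMulVec_star, Complex.real_smul]
  push_cast
  exact sum_congr rfl fun _ _ => sum_congr rfl fun _ _ => by ring

lemma trace_dephased_mul_self [DecidableEq κ] {b : κ → n → ℂ}
    (hb : ∀ j k, star (b j) ⬝ᵥ b k = if j = k then 1 else 0) (q : κ → ℝ) :
    (dephased b q * dephased b q).trace = ((∑ k, q k ^ 2 : ℝ) : ℂ) := by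
  simp [trace_dephased_mul_dephased, hb, apply_ite, sq]

lemma trace_dephased_mul_dephased_of_norm_sq_eq {b b' : κ → n → ℂ} {c : ℝ}
    (hbb' : ∀ k l, ‖star (b k) ⬝ᵥ b' l‖ ^ 2 = c) (q q' : κ → ℝ) :
    (dephased b q * dephased b' q').trace = ((c * ((∑ k, q k) * ∑ l, q' l) : ℝ) : ℂ) := by
  rw [trace_dephased_mul_dephased, sum_mul_sum, mul_sum]
  simp only [hbb', mul_comm c, sum_mul]

end Dephasing

section Bessel

variable {n ι : Type*} [Fintype n] [Fintype ι]

lemma Matrix.IsHermitian.re_trace_mul_self_le {A Y : Matrix n n ℂ} (hA : A.IsHermitian)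
    (hY : Y.IsHermitian) (hAY : (A * Y).trace = (Y * Y).trace) :
    (Y * Y).trace.re ≤ (A * A).trace.re := by
  have h := (posSemidef_conjTranspose_mul_self (A - Y)).trace_nonneg
  rw [(hA.sub hY).eq, sub_mul, mul_sub, mul_sub, trace_sub, trace_sub, trace_sub,
    trace_mul_comm Y A, hAY, sub_self, sub_zero, Complex.nonneg_iff] at h
  simpa using h.1

lemma Matrix.IsHermitian.sum_re_trace_mul_self_le {A : Matrix n n ℂ} {Y : ι → Matrix n n ℂ}
    (hA : A.IsHermitian) (hY : ∀ i, (Y i).IsHermitian)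
    (horth : Pairwise fun i j => (Y i * Y j).trace = 0)
    (hAY : ∀ i, (A * Y i).trace = (Y i * Y i).trace) :
    ∑ i, (Y i * Y i).trace.re ≤ (A * A).trace.re := by
  classical
  have hYY : ((∑ i, Y i) * ∑ i, Y i).trace = ∑ i, (Y i * Y i).trace := by
    simp only [sum_mul_sum, trace_sum]
    exact sum_congr rfl fun i _ => sum_eq_single i (fun j _ hj => horth hj.symm) (by simp)
  have h := hA.re_trace_mul_self_le (isSelfAdjoint_sum _ fun i _ => hY i)
    (by rw [mul_sum, trace_sum, hYY]; exact sum_congr rfl fun i _ => hAY i)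
  rwa [hYY, Complex.re_sum] at h

end Bessel

lemma trace_sub_smul_one_mul_sub_smul_one {n : Type*} [Fintype n] [DecidableEq n]
    {X Z : Matrix n n ℂ} (hX : X.trace = 1) (hZ : Z.trace = 1) :
    ((X - (Fintype.card n : ℝ)⁻¹ • 1) * (Z - (Fintype.card n : ℝ)⁻¹ • 1)).trace =
      (X * Z).trace - ((Fintype.card n : ℝ)⁻¹ : ℝ) := by
  simp only [sub_mul, mul_sub, Matrix.smul_mul, Matrix.mul_smul, Matrix.one_mul, Matrix.mul_one,
    trace_sub, trace_smul, trace_one, hX, hZ, smul_smul, Complex.real_smul]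
  rcases eq_or_ne (Fintype.card n : ℂ) 0 with h | h
  · simp [h]
  · push_cast
    field_simp
    ring

theorem sum_sum_sq_sub_le_of_mutuallyUnbiased {n ι : Type*} [Fintype n] [DecidableEq n]
    [Fintype ι] {B : ι → n → n → ℂ}
    (hON : ∀ i j k, star (B i j) ⬝ᵥ B i k = if j = k then 1 else 0)
    (hMUB : ∀ i j, i ≠ j → ∀ k l, ‖star (B i k) ⬝ᵥ B j l‖ ^ 2 = (Fintype.card n : ℝ)⁻¹)
    {ρ : Matrix n n ℂ} (hρ : ρ.IsHermitian) (htr : ρ.trace = 1) {p : ι → n → ℝ}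
    (hp : ∀ i k, star (B i k) ⬝ᵥ (ρ *ᵥ B i k) = p i k) :
    ∑ i, (∑ k, p i k ^ 2 - (Fintype.card n : ℝ)⁻¹) ≤
      (ρ * ρ).trace.re - (Fintype.card n : ℝ)⁻¹ := by
  set D : ι → Matrix n n ℂ := fun i => dephased (B i) (p i)
  have hsum i : ∑ k, p i k = 1 := sum_eq_one_of_star_dotProduct_mulVec_eq (hON i) htr (hp i)
  have htrD i : (D i).trace = 1 := by
    simp [D, trace_dephased (b := B i) (fun k => by simp [hON]), hsum]
  have hρD i : (ρ * D i).trace = ((∑ k, p i k ^ 2 : ℝ) : ℂ) := by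
    simp [D, trace_mul_dephased, hp, sq]
  have hDD i : (D i * D i).trace = ((∑ k, p i k ^ 2 : ℝ) : ℂ) := trace_dephased_mul_self (hON i) _
  have hDD' i j (hij : i ≠ j) : (D i * D j).trace = (Fintype.card n : ℝ)⁻¹ := by
    simp [D, trace_dephased_mul_dephased_of_norm_sq_eq (hMUB i j hij), hsum]
  have hcenter : ((Fintype.card n : ℝ)⁻¹ • 1 : Matrix n n ℂ).IsHermitian :=
    isHermitian_one.smul (IsSelfAdjoint.all _)
  have h := (hρ.sub hcenter).sum_re_trace_mul_self_le
    (Y := fun i => D i - (Fintype.card n : ℝ)⁻¹ • 1)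
    (fun i => (isHermitian_dephased _ _).sub hcenter)
    (fun i j hij => by
      simp only [trace_sub_smul_one_mul_sub_smul_one (htrD i) (htrD j), hDD' i j hij, sub_self])
    (fun i => by
      simp only [trace_sub_smul_one_mul_sub_smul_one htr (htrD i),
        trace_sub_smul_one_mul_sub_smul_one (htrD i) (htrD i), hρD, hDD])
  simpa only [trace_sub_smul_one_mul_sub_smul_one htr htr,
    trace_sub_smul_one_mul_sub_smul_one (htrD _) (htrD _), hDD, Complex.sub_re,
    Complex.ofReal_re] using h

lemma inn_eq_star_dotProduct {n : ℕ} (u v : Fin n → ℂ) : inn u v = star u ⬝ᵥ v := rfl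

lemma star_dotProduct_mulVec_eq_sum {n : Type*} [Fintype n] (M : Matrix n n ℂ) (v : n → ℂ) :
    star v ⬝ᵥ (M *ᵥ v) = ∑ a, ∑ b, (starRingEnd ℂ) (v a) * M a b * v b := by
  simp [dotProduct, mulVec, mul_sum, mul_assoc]

/-- Rényi-2 lower-bounds Shannon entropy: H(p) ≥ −log₂ ∑ pₖ²; consequently for
a complete set of d+1 MUBs measured on ρ,
∑ᵢ H(Mᵢ) ≥ −(d+1) log₂((tr ρ² + 1)/(d+1)). -/
theorem renyi2_bound_and_cmub_entropy_sum (d : ℕ) (hd : 0 < d)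
    (B : Fin (d + 1) → Fin d → Fin d → ℂ)
    (hON : ∀ i, ∀ j k, inn (B i j) (B i k) = if j = k then 1 else 0)
    (hMUB : ∀ i j, i ≠ j → ∀ k l,
      ‖inn (B i k) (B j l)‖ ^ 2 = 1 / d)
    (ρ : Matrix (Fin d) (Fin d) ℂ) (hρ : ρ.PosSemidef) (htr : ρ.trace = 1)
    (p : Fin (d + 1) → Fin d → ℝ)
    (hp : ∀ i k, p i k =
      (∑ a, ∑ b, (starRingEnd ℂ) (B i k a) * ρ a b * B i k b).re) :
    (∀ (q : Fin d → ℝ), (∀ k, 0 ≤ q k) → (∑ k, q k = 1) →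
      -∑ k, q k * Real.logb 2 (q k) ≥ -Real.logb 2 (∑ k, (q k) ^ 2)) ∧
    (∑ i, -∑ k, p i k * Real.logb 2 (p i k)) ≥
      -((d : ℝ) + 1) * Real.logb 2 ((((ρ * ρ).trace).re + 1) / ((d : ℝ) + 1)) := by
  refine ⟨fun q hq0 hq1 => collisionEntropy_le_shannonEntropy hq0 hq1, ?_⟩
  have hprob i k : star (B i k) ⬝ᵥ (ρ *ᵥ B i k) = p i k := by
    rw [hp, ← star_dotProduct_mulVec_eq_sum]
    exact Complex.eq_re_of_ofReal_le (r := 0) (by exact_mod_cast hρ.dotProduct_mulVec_nonneg _)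
  have hp0 i k : 0 ≤ p i k := by simpa [hprob] using hρ.dotProduct_mulVec_nonneg (B i k)
  have hp1 i : ∑ k, p i k = 1 := sum_eq_one_of_star_dotProduct_mulVec_eq (hON i) htr (hprob i)
  have hsq : ∑ i, ∑ k, p i k ^ 2 ≤ (ρ * ρ).trace.re + 1 := by
    have h := sum_sum_sq_sub_le_of_mutuallyUnbiased hON
      (by simpa [inn_eq_star_dotProduct] using hMUB) hρ.isHermitian htr hprob
    simp only [sum_sub_distrib, sum_const, card_univ, Fintype.card_fin, nsmul_eq_mul] at h
    have hd' : ((d : ℝ) + 1) * (d : ℝ)⁻¹ = 1 + (d : ℝ)⁻¹ := by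
      field_simp [(Nat.cast_pos.mpr hd).ne']
    push_cast at h
    linarith
  have hmean : 0 < (∑ i, ∑ k, p i k ^ 2) / ((d : ℝ) + 1) :=
    div_pos (sum_pos (fun i _ => sum_sq_pos_of_sum_eq_one (hp1 i)) univ_nonempty) (by positivity)
  calc -((d : ℝ) + 1) * logb 2 ((((ρ * ρ).trace).re + 1) / ((d : ℝ) + 1))
      ≤ -((d : ℝ) + 1) * logb 2 ((∑ i, ∑ k, p i k ^ 2) / ((d : ℝ) + 1)) :=
        mul_le_mul_of_nonpos_left (logb_le_logb_of_le one_lt_two hmean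
          (div_le_div_of_nonneg_right hsq (by positivity))) (by linarith)
    _ ≤ ∑ i, shannonEntropy (p i) := by
        simpa using neg_card_mul_logb_mean_le_sum_shannonEntropy hp0 hp1
end

section
/- For a probability distribution $p = (p_1,\dots,p_d)$ with $\sum_k p_k^2 = C$, the Shannon entropy obeys the upper bound $H(p) \le \log_2 d - \frac{(d-1)(dC - 1)}{d(d-2)}\log_2(d-1)$ when $d > 2$, and $H(p) \le 1 - \frac{2C-1}{2\ln 2}$ when $d = 2$. -/
open Real Set

namespace SRAux

/-- monotone piece from derivative -/
lemma mono_Icc {f f' : ℝ → ℝ} {a b : ℝ}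
    (hc : ContinuousOn f (Icc a b))
    (hd : ∀ x ∈ Ioo a b, HasDerivAt f (f' x) x)
    (h0 : ∀ x ∈ Ioo a b, 0 ≤ f' x) : MonotoneOn f (Icc a b) := by
  apply monotoneOn_of_hasDerivWithinAt_nonneg (convex_Icc a b) hc
  · intro x hx
    rw [interior_Icc] at hx
    exact ((hd x hx).hasDerivWithinAt)
  · intro x hx
    rw [interior_Icc] at hx
    exact h0 x hx

lemma anti_Icc {f f' : ℝ → ℝ} {a b : ℝ}
    (hc : ContinuousOn f (Icc a b))
    (hd : ∀ x ∈ Ioo a b, HasDerivAt f (f' x) x)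
    (h0 : ∀ x ∈ Ioo a b, f' x ≤ 0) : AntitoneOn f (Icc a b) := by
  apply antitoneOn_of_hasDerivWithinAt_nonpos (convex_Icc a b) hc
  · intro x hx
    rw [interior_Icc] at hx
    exact ((hd x hx).hasDerivWithinAt)
  · intro x hx
    rw [interior_Icc] at hx
    exact h0 x hx

/-- log x ≤ x / e -/
lemma log_le_div_e {x : ℝ} (hx : 0 < x) : Real.log x ≤ x / Real.exp 1 := by
  have h := Real.log_le_sub_one_of_pos (x := x / Real.exp 1) (by positivity)
  rw [Real.log_div (ne_of_gt hx) (ne_of_gt (Real.exp_pos 1)), Real.log_exp] at h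
  linarith

lemma two_lt_e : (2.7182818283 : ℝ) < Real.exp 1 := Real.exp_one_gt_d9

noncomputable def Phi (c s : ℝ) : ℝ :=
  (1+s) * Real.log (1+s) + (c-s) * Real.log (c-s) - (c-s) * Real.log c
    - s^2 * Real.log c / (c-1)

noncomputable def phi1 (c s : ℝ) : ℝ :=
  Real.log (1+s) - Real.log (c-s) + Real.log c - 2*s*Real.log c/(c-1)

noncomputable def phi2 (c s : ℝ) : ℝ := (1+s)⁻¹ + (c-s)⁻¹ - 2*Real.log c/(c-1)

noncomputable def phi3 (c s : ℝ) : ℝ := ((c-s)^2)⁻¹ - ((1+s)^2)⁻¹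

noncomputable def phi4 (c s : ℝ) : ℝ := 2*((c-s)^3)⁻¹ + 2*((1+s)^3)⁻¹

lemma continuous_Phi (c : ℝ) : Continuous (Phi c) := by
  unfold Phi
  have h1 : Continuous fun s : ℝ => (1+s) * Real.log (1+s) :=
    Real.continuous_mul_log.comp (continuous_const.add continuous_id)
  have h2 : Continuous fun s : ℝ => (c-s) * Real.log (c-s) :=
    Real.continuous_mul_log.comp (continuous_const.sub continuous_id)
  exact ((h1.add h2).sub ((continuous_const.sub continuous_id).mul continuous_const)).sub
    (((continuous_pow 2).mul continuous_const).div_const _)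

lemma hasDerivAt_Phi {c s : ℝ} (h1 : -1 < s) (h2 : s < c) :
    HasDerivAt (Phi c) (phi1 c s) s := by
  have hs1 : (1:ℝ) + s ≠ 0 := by linarith
  have hs2 : c - s ≠ 0 := by linarith
  have d1 : HasDerivAt (fun s : ℝ => (1+s) * Real.log (1+s)) (Real.log (1+s) + 1) s := by
    have := (Real.hasDerivAt_mul_log hs1).comp s
      ((hasDerivAt_id s).const_add 1)
    simpa [Function.comp_def] using this
  have d2 : HasDerivAt (fun s : ℝ => (c-s) * Real.log (c-s)) (-(Real.log (c-s) + 1)) s := by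
    have := (Real.hasDerivAt_mul_log hs2).comp s
      ((hasDerivAt_id s).const_sub c)
    simpa [Function.comp_def] using this
  have d3 : HasDerivAt (fun s : ℝ => (c-s) * Real.log c) (-Real.log c) s := by
    have := ((hasDerivAt_id s).const_sub c).mul_const (Real.log c)
    simpa using this
  have d4 : HasDerivAt (fun s : ℝ => s^2 * Real.log c / (c-1))
      (2*s*Real.log c/(c-1)) s := by
    have := ((hasDerivAt_pow 2 s).mul_const (Real.log c)).div_const (c-1)
    simpa [mul_comm, mul_assoc, mul_left_comm] using this
  have := ((d1.add d2).sub d3).sub d4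
  refine this.congr_deriv ?_
  unfold phi1
  ring

lemma hasDerivAt_phi1 {c s : ℝ} (h1 : -1 < s) (h2 : s < c) :
    HasDerivAt (phi1 c) (phi2 c s) s := by
  have hs1 : (1:ℝ) + s ≠ 0 := by linarith
  have hs2 : c - s ≠ 0 := by linarith
  have d1 : HasDerivAt (fun s : ℝ => Real.log (1+s)) (1+s)⁻¹ s := by
    have := (Real.hasDerivAt_log hs1).comp s ((hasDerivAt_id s).const_add 1)
    simpa [Function.comp_def] using this
  have d2 : HasDerivAt (fun s : ℝ => Real.log (c-s)) (-(c-s)⁻¹) s := by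
    have := (Real.hasDerivAt_log hs2).comp s ((hasDerivAt_id s).const_sub c)
    simpa [Function.comp_def] using this
  have d4 : HasDerivAt (fun s : ℝ => 2*s*Real.log c/(c-1))
      (2*Real.log c/(c-1)) s := by
    have : HasDerivAt (fun s : ℝ => s * (2*Real.log c/(c-1))) (2*Real.log c/(c-1)) s := by
      simpa using (hasDerivAt_id s).mul_const (2*Real.log c/(c-1))
    convert this using 2 with x
    ring
  have := ((d1.sub d2).add_const (Real.log c)).sub d4
  refine this.congr_deriv ?_
  unfold phi2
  ring

lemma hasDerivAt_phi2 {c s : ℝ} (h1 : -1 < s) (h2 : s < c) :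
    HasDerivAt (phi2 c) (phi3 c s) s := by
  have hs1 : (1:ℝ) + s ≠ 0 := by linarith
  have hs2 : c - s ≠ 0 := by linarith
  have d1 : HasDerivAt (fun s : ℝ => (1+s)⁻¹) (-((1+s)^2)⁻¹) s := by
    have := (((hasDerivAt_id s).const_add 1).inv hs1)
    refine this.congr_deriv ?_
    simp only [id]; field_simp
  have d2 : HasDerivAt (fun s : ℝ => (c-s)⁻¹) (((c-s)^2)⁻¹) s := by
    have := (((hasDerivAt_id s).const_sub c).inv hs2)
    refine this.congr_deriv ?_
    simp only [id]; field_simp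
    try ring
  have := (d1.add d2).sub_const (2*Real.log c/(c-1))
  refine this.congr_deriv ?_
  unfold phi3
  ring

lemma hasDerivAt_phi3 {c s : ℝ} (h1 : -1 < s) (h2 : s < c) :
    HasDerivAt (phi3 c) (phi4 c s) s := by
  have hs1 : (1:ℝ) + s ≠ 0 := by linarith
  have hs2 : c - s ≠ 0 := by linarith
  have hq1 : ((1:ℝ)+s)^2 ≠ 0 := pow_ne_zero _ hs1
  have hq2 : (c-s)^2 ≠ 0 := pow_ne_zero _ hs2
  have e1 : HasDerivAt (fun s : ℝ => (1+s)^2) (2*(1+s)) s := by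
    have := ((hasDerivAt_id s).const_add 1).pow 2
    simpa [mul_comm, Pi.pow_def] using this
  have e2 : HasDerivAt (fun s : ℝ => (c-s)^2) (-(2*(c-s))) s := by
    have := ((hasDerivAt_id s).const_sub c).pow 2
    simpa [mul_comm, Pi.pow_def] using this
  have d1 : HasDerivAt (fun s : ℝ => (((1:ℝ)+s)^2)⁻¹) (-(2*((1+s)^3)⁻¹)) s := by
    have := e1.inv hq1
    refine this.congr_deriv ?_
    field_simp
  have d2 : HasDerivAt (fun s : ℝ => ((c-s)^2)⁻¹) (2*((c-s)^3)⁻¹) s := by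
    have := e2.inv hq2
    refine this.congr_deriv ?_
    field_simp
  have := d2.sub d1
  refine this.congr_deriv ?_
  unfold phi4
  ring

lemma Phi_zero {c : ℝ} : Phi c 0 = 0 := by
  unfold Phi
  simp [Real.log_one]

lemma Phi_cm1 {c : ℝ} (hc1 : c - 1 ≠ 0) : Phi c (c-1) = 0 := by
  unfold Phi
  have h1 : c - (c-1) = 1 := by ring
  rw [h1, Real.log_one]
  field_simp
  ring

lemma phi1_zero {c : ℝ} : phi1 c 0 = 0 := by
  unfold phi1
  simp [Real.log_one]

lemma phi1_cm1 {c : ℝ} (hc1 : c - 1 ≠ 0) : phi1 c (c-1) = 0 := by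
  unfold phi1
  have h1 : c - (c-1) = 1 := by ring
  rw [h1, Real.log_one]
  field_simp
  ring

lemma E_pos {c : ℝ} (hc : 2 ≤ c) : 0 < phi2 c 0 := by
  have hc0 : (0:ℝ) < c := by linarith
  have hc1 : (0:ℝ) < c - 1 := by linarith
  have hL : Real.log c ≤ c / Real.exp 1 := log_le_div_e hc0
  have he : (2.7182818283 : ℝ) < Real.exp 1 := two_lt_e
  have hepos := Real.exp_pos 1
  have hc4 : (4:ℝ) ≤ c^2 := by nlinarith
  have key : 2 * c * Real.log c < c^2 - 1 := by
    have h1 : 2 * c * Real.log c ≤ 2 * c * (c / Real.exp 1) :=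
      mul_le_mul_of_nonneg_left hL (by linarith)
    have h2 : 2 * c * (c / Real.exp 1) < c^2 - 1 := by
      rw [mul_div_assoc', div_lt_iff₀ hepos]
      nlinarith [mul_nonneg (sub_nonneg.2 he.le) (sub_nonneg.2 hc4)]
    linarith
  have h0 : phi2 c 0 = 1 + c⁻¹ - 2*Real.log c/(c-1) := by
    unfold phi2
    norm_num
  rw [h0]
  have h3 : 2 * Real.log c / (c-1) < 1 + c⁻¹ := by
    rw [div_lt_iff₀ hc1]
    have h4 : (1 + c⁻¹) * (c - 1) = (c^2 - 1)/c := by field_simp; ring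
    rw [h4, lt_div_iff₀ hc0]
    linarith
  linarith

lemma phi2_cm1 {c : ℝ} (hc : 2 ≤ c) : phi2 c (c-1) = phi2 c 0 := by
  unfold phi2
  have h1 : 1 + (c-1) = c := by ring
  have h2 : c - (c-1) = 1 := by ring
  rw [h1, h2]
  norm_num
  try ring

lemma log_two_gt_23 : (2:ℝ)/3 < Real.log 2 := by
  have := Real.log_two_gt_d9
  linarith

lemma key_mid {c : ℝ} (hc : 2 ≤ c) : 2*(c-1) < (c+1) * Real.log c := by
  have base : (0:ℝ) < 3 * Real.log 2 - 2 := by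
    have := log_two_gt_23
    linarith
  have hmono : MonotoneOn (fun x : ℝ => (x+1) * Real.log x - 2*(x-1)) (Icc 2 c) := by
    apply mono_Icc (f' := fun x => Real.log x + x⁻¹ - 1)
    · intro x hx
      have hx0 : x ≠ 0 := by have := hx.1; intro h; rw [h] at this; norm_num at this
      exact (((continuousAt_id.add continuousAt_const).mul
        (Real.continuousAt_log hx0)).sub
        (continuousAt_const.mul (continuousAt_id.sub continuousAt_const))).continuousWithinAt
    · intro x hx
      have hx0 : (0:ℝ) < x := by have := hx.1; linarith
      have d1 : HasDerivAt (fun x : ℝ => (x+1) * Real.log x)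
          (Real.log x + (x+1) * x⁻¹) x := by
        have := ((hasDerivAt_id x).add_const 1).mul (Real.hasDerivAt_log (ne_of_gt hx0))
        refine this.congr_deriv ?_
        simp only [id]; field_simp
        try ring
      have d2 : HasDerivAt (fun x : ℝ => 2*(x-1)) 2 x := by
        have := ((hasDerivAt_id x).sub_const 1).const_mul 2
        simpa using this
      have := d1.sub d2
      refine this.congr_deriv ?_
      field_simp
      ring
    · intro x hx
      have hx0 : (0:ℝ) < x := by have := hx.1; linarith
      have hlog : Real.log x⁻¹ ≤ x⁻¹ - 1 := Real.log_le_sub_one_of_pos (by positivity)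
      rw [Real.log_inv] at hlog
      linarith
  have h2 := hmono (mem_Icc.2 ⟨le_refl 2, hc⟩) (mem_Icc.2 ⟨hc, le_refl c⟩) hc
  simp only at h2
  nlinarith [h2, base]

lemma phi2_mid_neg {c : ℝ} (hc : 2 ≤ c) : phi2 c ((c-1)/2) < 0 := by
  have hc1 : (0:ℝ) < c - 1 := by linarith
  have hc2 : (0:ℝ) < c + 1 := by linarith
  have key := key_mid hc
  unfold phi2
  have h1 : 1 + (c-1)/2 = (c+1)/2 := by ring
  have h2 : c - (c-1)/2 = (c+1)/2 := by ring
  rw [h1, h2]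
  have h3 : ((c+1)/2 : ℝ)⁻¹ + ((c+1)/2)⁻¹ = 4/(c+1) := by
    rw [inv_div]
    ring
  rw [h3, sub_neg, div_lt_div_iff₀ hc2 hc1]
  linarith

lemma convexOn_phi2 {c : ℝ} (hc : 2 ≤ c) : ConvexOn ℝ (Ioo (-1:ℝ) c) (phi2 c) := by
  have hint : interior (Ioo (-1:ℝ) c) = Ioo (-1:ℝ) c := isOpen_Ioo.interior_eq
  have hder : ∀ x ∈ Ioo (-1:ℝ) c, HasDerivAt (phi2 c) (phi3 c x) x :=
    fun x hx => hasDerivAt_phi2 hx.1 hx.2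
  have hmono3 : MonotoneOn (phi3 c) (Ioo (-1:ℝ) c) := by
    apply monotoneOn_of_hasDerivWithinAt_nonneg (convex_Ioo _ _)
    · exact fun x hx => (hasDerivAt_phi3 hx.1 hx.2).continuousAt.continuousWithinAt
    · intro x hx
      rw [hint] at hx ⊢
      exact (hasDerivAt_phi3 hx.1 hx.2).hasDerivWithinAt
    · intro x hx
      rw [hint] at hx
      have h1 : (0:ℝ) < 1 + x := by have := hx.1; linarith
      have h2 : (0:ℝ) < c - x := by have := hx.2; linarith
      unfold phi4
      positivity
  apply MonotoneOn.convexOn_of_deriv (convex_Ioo _ _)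
  · exact fun x hx => (hder x hx).continuousAt.continuousWithinAt
  · intro x hx
    rw [hint] at hx
    exact (hder x hx).differentiableAt.differentiableWithinAt
  · rw [hint]
    intro x hx y hy hxy
    rw [(hder x hx).deriv, (hder y hy).deriv]
    exact hmono3 hx hy hxy

/-- The main one-variable inequality. -/
lemma Phi_nonneg {c : ℝ} (hc : 2 ≤ c) {s : ℝ} (hs : s ∈ Icc (-1:ℝ) c) :
    0 ≤ Phi c s := by
  have hc0 : (0:ℝ) < c := by linarith
  have hc1 : (0:ℝ) < c - 1 := by linarith
  have hc1' : c - 1 ≠ 0 := ne_of_gt hc1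
  have hA : 0 < Real.log c := Real.log_pos (by linarith)
  -- endpoint s = -1
  rcases eq_or_lt_of_le hs.1 with hm1 | hgt
  · have hlog : Real.log (c/(c+1)) ≤ c/(c+1) - 1 := Real.log_le_sub_one_of_pos (by positivity)
    have hlogc : Real.log c ≤ c - 1 := by
      have := Real.log_le_sub_one_of_pos hc0
      linarith
    have hdiv : Real.log (c/(c+1)) = Real.log c - Real.log (c+1) := by
      rw [Real.log_div (ne_of_gt hc0) (by positivity)]
    have hfrac : c/(c+1) - 1 = -(1/(c+1)) := by field_simp; ring
    have h1 : 1/(c+1) ≤ Real.log (c+1) - Real.log c := by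
      rw [hdiv, hfrac] at hlog
      linarith
    have hPhi : Phi c (-1) = (c+1) * (Real.log (c+1) - Real.log c) - Real.log c/(c-1) := by
      unfold Phi
      have e1 : (1:ℝ) + -1 = 0 := by ring
      have e2 : c - (-1) = c + 1 := by ring
      rw [e1, e2, Real.log_zero]
      ring
    rw [← hm1, hPhi]
    have h2 : (1:ℝ) ≤ (c+1) * (Real.log (c+1) - Real.log c) := by
      have := mul_le_mul_of_nonneg_left h1 (by positivity : (0:ℝ) ≤ c+1)
      have he : (c+1) * (1/(c+1)) = 1 := by field_simp
      linarith [he ▸ this]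
    have h3 : Real.log c/(c-1) ≤ 1 := by
      rw [div_le_one hc1]
      linarith
    linarith
  -- endpoint s = c
  rcases eq_or_lt_of_le hs.2 with hceq | hlt
  · rw [hceq]
    have hlog : Real.log (c/(c+1)) ≤ c/(c+1) - 1 := Real.log_le_sub_one_of_pos (by positivity)
    have hdiv : Real.log (c/(c+1)) = Real.log c - Real.log (c+1) := by
      rw [Real.log_div (ne_of_gt hc0) (by positivity)]
    have hfrac : c/(c+1) - 1 = -(1/(c+1)) := by field_simp; ring
    have h1 : 1/(c+1) ≤ Real.log (c+1) - Real.log c := by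
      rw [hdiv, hfrac] at hlog
      linarith
    have hPhi : Phi c c = (1+c) * Real.log (1+c) - c^2 * Real.log c/(c-1) := by
      unfold Phi
      have e1 : c - c = 0 := by ring
      rw [e1, Real.log_zero]
      ring
    rw [hPhi]
    have hL1 : Real.log (c+1) ≤ (c+1)/Real.exp 1 := log_le_div_e (by positivity)
    have he : (2.7182818283 : ℝ) < Real.exp 1 := two_lt_e
    rw [sub_nonneg, div_le_iff₀ hc1]
    have hstep : c^2 * Real.log c ≤ c^2 * Real.log (c+1) - c^2/(c+1) := by
      have := mul_le_mul_of_nonneg_left h1 (sq_nonneg c)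
      have e : c^2 * (1/(c+1)) = c^2/(c+1) := by ring
      nlinarith [this]
    have hlast : c^2 * Real.log (c+1) - c^2/(c+1) ≤ ((1+c) * Real.log (1+c)) * (c-1) := by
      have e0 : (1:ℝ) + c = c + 1 := by ring
      rw [e0]
      have expand : ((c+1) * Real.log (c+1)) * (c-1) = (c^2-1) * Real.log (c+1) := by ring
      rw [expand]
      have hneed : Real.log (c+1) ≤ c^2/(c+1) := by
        have h5 : (c+1)/Real.exp 1 ≤ c^2/(c+1) := by
          rw [div_le_div_iff₀ (Real.exp_pos 1) (by positivity)]
          nlinarith [mul_nonneg (sub_nonneg.2 he.le) (sq_nonneg (c-2)),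
            mul_nonneg (sub_nonneg.2 he.le) (by linarith : (0:ℝ) ≤ c-2)]
        linarith
      nlinarith [hneed]
    linarith
  -- now -1 < s < c
  set s0 : ℝ := (c-1)/2 with hs0def
  have hs0pos : 0 < s0 := by rw [hs0def]; linarith
  have hs0lt : s0 < c-1 := by rw [hs0def]; linarith
  have hEpos := E_pos hc
  have hmidneg := phi2_mid_neg hc
  have hcm1pos : 0 < phi2 c (c-1) := by rw [phi2_cm1 hc]; exact hEpos
  have hcont2 : ∀ {a b : ℝ}, -1 < a → b < c → ContinuousOn (phi2 c) (Icc a b) := by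
    intro a b ha hb x hx
    exact (hasDerivAt_phi2 (lt_of_lt_of_le ha hx.1) (lt_of_le_of_lt hx.2 hb)).continuousAt.continuousWithinAt
  obtain ⟨u, huI, hu0⟩ : ∃ u ∈ Icc (0:ℝ) s0, phi2 c u = 0 := by
    have him := intermediate_value_Icc' hs0pos.le (hcont2 (by norm_num) (by linarith))
    have h0 : (0:ℝ) ∈ Icc (phi2 c s0) (phi2 c 0) := ⟨hmidneg.le, hEpos.le⟩
    obtain ⟨u, hu, hval⟩ := him h0
    exact ⟨u, hu, hval⟩
  obtain ⟨v, hvI, hv0⟩ : ∃ v ∈ Icc s0 (c-1), phi2 c v = 0 := by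
    have him := intermediate_value_Icc hs0lt.le (hcont2 (by linarith) (by linarith))
    have h0 : (0:ℝ) ∈ Icc (phi2 c s0) (phi2 c (c-1)) := ⟨hmidneg.le, hcm1pos.le⟩
    obtain ⟨v, hv, hval⟩ := him h0
    exact ⟨v, hv, hval⟩
  have hu1 : 0 < u := by
    rcases eq_or_lt_of_le huI.1 with h | h
    · exfalso; rw [← h] at hu0; exact absurd hu0 hEpos.ne'
    · exact h
  have hu2 : u < s0 := by
    rcases eq_or_lt_of_le huI.2 with h | h
    · exfalso; rw [h] at hu0; exact absurd hu0 hmidneg.ne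
    · exact h
  have hv1 : s0 < v := by
    rcases eq_or_lt_of_le hvI.1 with h | h
    · exfalso; rw [← h] at hv0; exact absurd hv0 hmidneg.ne
    · exact h
  have hv2 : v < c-1 := by
    rcases eq_or_lt_of_le hvI.2 with h | h
    · exfalso; rw [h] at hv0; exact absurd hv0 hcm1pos.ne'
    · exact h
  have hconv := convexOn_phi2 hc
  have hs0mem : s0 ∈ Ioo (-1:ℝ) c := ⟨by linarith, by linarith⟩
  -- sign of phi2
  have sign1 : ∀ x, -1 < x → x ≤ u → 0 ≤ phi2 c x := by
    intro x hx1 hxu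
    rcases eq_or_lt_of_le hxu with he | hlt2
    · rw [he, hu0]
    · by_contra hneg
      push_neg at hneg
      have hxs0 : x < s0 := by linarith
      have hden : 0 < s0 - x := by linarith
      set a := (s0 - u)/(s0 - x) with ha
      have ha0 : 0 < a := div_pos (by linarith) hden
      have ha1 : a < 1 := by rw [ha, div_lt_one hden]; linarith
      have hxm : x ∈ Ioo (-1:ℝ) c := ⟨hx1, by linarith⟩
      have hcomb := hconv.2 hxm hs0mem ha0.le (by linarith : (0:ℝ) ≤ 1 - a) (by ring)
      simp only [smul_eq_mul] at hcomb
      have heq : a * x + (1-a) * s0 = u := by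
        rw [ha]
        field_simp
        ring
      rw [heq, hu0] at hcomb
      have t1 : a * phi2 c x < 0 := mul_neg_of_pos_of_neg ha0 hneg
      have t2 : (1-a) * phi2 c s0 < 0 := mul_neg_of_pos_of_neg (by linarith) hmidneg
      linarith
  have sign3 : ∀ x, v ≤ x → x < c → 0 ≤ phi2 c x := by
    intro x hxv hxc
    rcases eq_or_lt_of_le hxv with he | hlt2
    · rw [← he, hv0]
    · by_contra hneg
      push_neg at hneg
      have hden : 0 < x - s0 := by linarith
      set a := (x - v)/(x - s0) with ha
      have ha0 : 0 < a := div_pos (by linarith) hden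
      have ha1 : a < 1 := by rw [ha, div_lt_one hden]; linarith
      have hxm : x ∈ Ioo (-1:ℝ) c := ⟨by linarith, hxc⟩
      have hcomb := hconv.2 hs0mem hxm ha0.le (by linarith : (0:ℝ) ≤ 1 - a) (by ring)
      simp only [smul_eq_mul] at hcomb
      have heq : a * s0 + (1-a) * x = v := by
        rw [ha]
        field_simp
        ring
      rw [heq, hv0] at hcomb
      have t1 : a * phi2 c s0 < 0 := mul_neg_of_pos_of_neg ha0 hmidneg
      have t2 : (1-a) * phi2 c x < 0 := mul_neg_of_pos_of_neg (by linarith) hneg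
      linarith
  have sign2 : ∀ x, u ≤ x → x ≤ v → phi2 c x ≤ 0 := by
    intro x hxu hxv
    rcases eq_or_lt_of_le hxu with he | h1
    · rw [← he, hu0]
    rcases eq_or_lt_of_le hxv with he | h2
    · rw [he, hv0]
    have hden : 0 < v - u := by linarith
    set a := (v - x)/(v - u) with ha
    have ha0 : 0 < a := div_pos (by linarith) hden
    have ha1 : a < 1 := by rw [ha, div_lt_one hden]; linarith
    have hum : u ∈ Ioo (-1:ℝ) c := ⟨by linarith, by linarith⟩
    have hvm : v ∈ Ioo (-1:ℝ) c := ⟨by linarith, by linarith⟩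
    have hcomb := hconv.2 hum hvm ha0.le (by linarith : (0:ℝ) ≤ 1 - a) (by ring)
    simp only [smul_eq_mul] at hcomb
    have heq : a * u + (1-a) * v = x := by
      rw [ha]
      field_simp
      ring
    rw [heq, hu0, hv0] at hcomb
    linarith
  -- phi1 facts
  have phi1cont : ∀ {a b : ℝ}, -1 < a → b < c → ContinuousOn (phi1 c) (Icc a b) := by
    intro a b ha hb x hx
    exact (hasDerivAt_phi1 (lt_of_lt_of_le ha hx.1) (lt_of_le_of_lt hx.2 hb)).continuousAt.continuousWithinAt
  have phi1d : ∀ {a b : ℝ}, -1 < a → b < c → ∀ x ∈ Ioo a b, HasDerivAt (phi1 c) (phi2 c x) x := by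
    intro a b ha hb x hx
    exact hasDerivAt_phi1 (ha.trans hx.1) (hx.2.trans hb)
  have Phicont : Continuous (Phi c) := continuous_Phi c
  have Phid : ∀ {a b : ℝ}, -1 < a → b < c → ∀ x ∈ Ioo a b, HasDerivAt (Phi c) (phi1 c x) x := by
    intro a b ha hb x hx
    exact hasDerivAt_Phi (ha.trans hx.1) (hx.2.trans hb)
  have P0 : Phi c 0 = 0 := Phi_zero
  have Pc1 : Phi c (c-1) = 0 := Phi_cm1 hc1'
  have q0 : phi1 c 0 = 0 := phi1_zero
  have qc1 : phi1 c (c-1) = 0 := phi1_cm1 hc1'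
  -- phi1 ≥ 0 on [0,u]
  have phi1nn0u : ∀ x ∈ Icc (0:ℝ) u, 0 ≤ phi1 c x := by
    have hm : MonotoneOn (phi1 c) (Icc 0 u) :=
      mono_Icc (phi1cont (by norm_num) (by linarith)) (phi1d (by norm_num) (by linarith))
        (fun y hy => sign1 y (by linarith [hy.1]) hy.2.le)
    intro x hx
    have := hm (left_mem_Icc.2 (by linarith)) hx hx.1
    rw [q0] at this
    exact this
  -- phi1 ≤ 0 on [v, c-1]
  have phi1np : ∀ x ∈ Icc v (c-1), phi1 c x ≤ 0 := by
    have hm : MonotoneOn (phi1 c) (Icc v (c-1)) :=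
      mono_Icc (phi1cont (by linarith) (by linarith)) (phi1d (by linarith) (by linarith))
        (fun y hy => sign3 y hy.1.le (by linarith [hy.2]))
    intro x hx
    have := hm hx (right_mem_Icc.2 (by linarith)) hx.2
    rw [qc1] at this
    exact this
  -- Phi ≥ 0 on [0,u]
  have PA : ∀ x ∈ Icc (0:ℝ) u, 0 ≤ Phi c x := by
    have hm : MonotoneOn (Phi c) (Icc 0 u) :=
      mono_Icc Phicont.continuousOn (Phid (by norm_num) (by linarith))
        (fun y hy => phi1nn0u y ⟨hy.1.le, hy.2.le⟩)
    intro x hx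
    have := hm (left_mem_Icc.2 (by linarith)) hx hx.1
    rw [P0] at this
    exact this
  -- Phi ≥ 0 on [v, c-1]
  have PB : ∀ x ∈ Icc v (c-1), 0 ≤ Phi c x := by
    have hm : AntitoneOn (Phi c) (Icc v (c-1)) :=
      anti_Icc Phicont.continuousOn (Phid (by linarith) (by linarith))
        (fun y hy => phi1np y ⟨hy.1.le, hy.2.le⟩)
    intro x hx
    have := hm hx (right_mem_Icc.2 (by linarith)) hx.2
    rw [Pc1] at this
    exact this
  -- now the case analysis on s
  by_cases hsle0 : s ≤ 0
  · -- phi1 ≤ 0 on (-1, 0]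
    have phi1neg : ∀ x ∈ Ioo s 0, phi1 c x ≤ 0 := by
      intro x hx
      have hm : MonotoneOn (phi1 c) (Icc x 0) :=
        mono_Icc (phi1cont (hgt.trans hx.1) (by linarith)) (phi1d (hgt.trans hx.1) (by linarith))
          (fun y hy => sign1 y (by linarith [hy.1, hx.1]) (by linarith [hy.2]))
      have := hm (left_mem_Icc.2 hx.2.le) (right_mem_Icc.2 hx.2.le) hx.2.le
      rw [q0] at this
      exact this
    have hm : AntitoneOn (Phi c) (Icc s 0) :=
      anti_Icc Phicont.continuousOn (Phid hgt (by linarith)) phi1neg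
    have := hm (left_mem_Icc.2 hsle0) (right_mem_Icc.2 hsle0) hsle0
    rw [P0] at this
    exact this
  push_neg at hsle0
  by_cases hsu : s ≤ u
  · exact PA s ⟨hsle0.le, hsu⟩
  push_neg at hsu
  by_cases hsv : s ≤ v
  · -- s ∈ (u, v]
    have hanti : AntitoneOn (phi1 c) (Icc u v) :=
      anti_Icc (phi1cont (by linarith) (by linarith)) (phi1d (by linarith) (by linarith))
        (fun y hy => sign2 y hy.1.le hy.2.le)
    by_cases hps : 0 ≤ phi1 c s
    · -- Phi monotone on [u, s]
      have hm : MonotoneOn (Phi c) (Icc u s) :=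
        mono_Icc Phicont.continuousOn (Phid (by linarith) (by linarith))
          (fun y hy => by
            have := hanti (⟨hy.1.le, by linarith [hy.2]⟩ : y ∈ Icc u v)
              (⟨hsu.le, hsv⟩ : s ∈ Icc u v) hy.2.le
            linarith)
      have := hm (left_mem_Icc.2 hsu.le) (right_mem_Icc.2 hsu.le) hsu.le
      have hPu := PA u ⟨hu1.le, le_refl u⟩
      linarith
    · push_neg at hps
      have hm : AntitoneOn (Phi c) (Icc s v) :=
        anti_Icc Phicont.continuousOn (Phid (by linarith) (by linarith))
          (fun y hy => by
            have := hanti (⟨hsu.le, hsv⟩ : s ∈ Icc u v)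
              (⟨by linarith [hy.1], hy.2.le⟩ : y ∈ Icc u v) hy.1.le
            linarith)
      have := hm (left_mem_Icc.2 hsv) (right_mem_Icc.2 hsv) hsv
      have hPv := PB v ⟨le_refl v, by linarith⟩
      linarith
  push_neg at hsv
  by_cases hsc1 : s ≤ c-1
  · exact PB s ⟨hsv.le, hsc1⟩
  push_neg at hsc1
  -- s ∈ (c-1, c)
  have phi1pos : ∀ x ∈ Ioo (c-1) s, 0 ≤ phi1 c x := by
    intro x hx
    have hm : MonotoneOn (phi1 c) (Icc (c-1) x) :=
      mono_Icc (phi1cont (by linarith) (by linarith [hx.2])) (phi1d (by linarith) (by linarith [hx.2]))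
        (fun y hy => sign3 y (by linarith [hy.1]) (by linarith [hy.2, hx.2]))
    have := hm (left_mem_Icc.2 hx.1.le) (right_mem_Icc.2 hx.1.le) hx.1.le
    rw [qc1] at this
    exact this
  have hm : MonotoneOn (Phi c) (Icc (c-1) s) :=
    mono_Icc Phicont.continuousOn (Phid (by linarith) hlt) phi1pos
  have := hm (left_mem_Icc.2 hsc1.le) (right_mem_Icc.2 hsc1.le) hsc1.le
  rw [Pc1] at this
  exact this

noncomputable def Gf (b x : ℝ) : ℝ := b * x^2 - x * Real.log x

lemma continuous_Gf (b : ℝ) : Continuous (Gf b) :=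
  (continuous_const.mul (continuous_pow 2)).sub Real.continuous_mul_log

lemma hasDerivAt_Gf {x : ℝ} (b : ℝ) (hx : x ≠ 0) :
    HasDerivAt (Gf b) (2*b*x - Real.log x - 1) x := by
  have h1 : HasDerivAt (fun x : ℝ => b * x^2) (2*b*x) x := by
    have := (hasDerivAt_pow 2 x).const_mul b
    refine this.congr_deriv ?_
    push_cast
    ring
  have := h1.sub (Real.hasDerivAt_mul_log hx)
  refine this.congr_deriv ?_
  ring

lemma strictConcave_Gf {b : ℝ} (hb : 0 < b) :
    StrictConcaveOn ℝ (Icc (0:ℝ) (1/(2*b))) (Gf b) := by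
  apply StrictAntiOn.strictConcaveOn_of_deriv (convex_Icc _ _) (continuous_Gf b).continuousOn
  rw [interior_Icc]
  have heq : ∀ x ∈ Ioo (0:ℝ) (1/(2*b)), deriv (Gf b) x = 2*b*x - Real.log x - 1 :=
    fun x hx => (hasDerivAt_Gf b (ne_of_gt hx.1)).deriv
  have hanti : StrictAntiOn (fun x : ℝ => 2*b*x - Real.log x - 1) (Ioo (0:ℝ) (1/(2*b))) := by
    apply strictAntiOn_of_deriv_neg (convex_Ioo _ _)
    · intro x hx
      exact (((hasDerivAt_id x).const_mul (2*b)).sub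
        (Real.hasDerivAt_log (ne_of_gt hx.1)) |>.sub_const 1).continuousAt.continuousWithinAt
    · intro x hx
      rw [isOpen_Ioo.interior_eq] at hx
      have hd : HasDerivAt (fun x : ℝ => 2*b*x - Real.log x - 1) (2*b - x⁻¹) x := by
        have := (((hasDerivAt_id x).const_mul (2*b)).sub
          (Real.hasDerivAt_log (ne_of_gt hx.1))).sub_const 1
        refine this.congr_deriv ?_
        ring
      rw [hd.deriv]
      have h2 : 2*b < x⁻¹ := by
        rw [inv_eq_one_div, lt_div_iff₀ hx.1]
        have := hx.2
        rw [lt_div_iff₀ (by linarith : (0:ℝ) < 2*b)] at this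
        linarith
      linarith
  intro x hx y hy hxy
  rw [heq x hx, heq y hy]
  exact hanti hx hy hxy

lemma strictConvex_Gf {b : ℝ} (hb : 0 < b) :
    StrictConvexOn ℝ (Ici (1/(2*b))) (Gf b) := by
  have hτ : (0:ℝ) < 1/(2*b) := by positivity
  apply StrictMonoOn.strictConvexOn_of_deriv (convex_Ici _) (continuous_Gf b).continuousOn
  rw [interior_Ici]
  have heq : ∀ x ∈ Ioi (1/(2*b)), deriv (Gf b) x = 2*b*x - Real.log x - 1 :=
    fun x hx => (hasDerivAt_Gf b (ne_of_gt (lt_trans hτ hx))).deriv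
  have hmono : StrictMonoOn (fun x : ℝ => 2*b*x - Real.log x - 1) (Ioi (1/(2*b))) := by
    apply strictMonoOn_of_deriv_pos (convex_Ioi _)
    · intro x hx
      have hx0 : (0:ℝ) < x := lt_trans hτ hx
      exact (((hasDerivAt_id x).const_mul (2*b)).sub
        (Real.hasDerivAt_log (ne_of_gt hx0)) |>.sub_const 1).continuousAt.continuousWithinAt
    · intro x hx
      rw [isOpen_Ioi.interior_eq] at hx
      have hx0 : (0:ℝ) < x := lt_trans hτ hx
      have hd : HasDerivAt (fun x : ℝ => 2*b*x - Real.log x - 1) (2*b - x⁻¹) x := by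
        have := (((hasDerivAt_id x).const_mul (2*b)).sub
          (Real.hasDerivAt_log (ne_of_gt hx0))).sub_const 1
        refine this.congr_deriv ?_
        ring
      rw [hd.deriv]
      have h2 : x⁻¹ < 2*b := by
        rw [inv_eq_one_div, div_lt_iff₀ hx0]
        have := hx
        rw [mem_Ioi, div_lt_iff₀ (by linarith : (0:ℝ) < 2*b)] at this
        linarith
      linarith
  intro x hx y hy hxy
  rw [heq x hx, heq y hy]
  exact hmono hx hy hxy

/-- Key reduction: value of the two-block configuration is at most the uniform value. -/
lemma W_le_R {c : ℝ} (hc : 2 ≤ c) {y : ℝ} (hy0 : 0 ≤ y) (hy1 : y ≤ 1) :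
    Gf (c*Real.log c/(c-1)) y + c * Gf (c*Real.log c/(c-1)) ((1-y)/c)
      ≤ (c+1) * Gf (c*Real.log c/(c-1)) (1/(c+1)) := by
  have hc0 : (0:ℝ) < c := by linarith
  have hc1 : (0:ℝ) < c - 1 := by linarith
  have hc2 : (0:ℝ) < c + 1 := by linarith
  have hs1 : -1 ≤ (c+1)*y - 1 := by nlinarith
  have hs2 : (c+1)*y - 1 ≤ c := by nlinarith
  have hPhi := Phi_nonneg hc (s := (c+1)*y - 1) ⟨hs1, hs2⟩
  have e1 : ((c+1)*y) * Real.log ((c+1)*y)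
      = ((c+1)*y) * Real.log (c+1) + ((c+1)*y) * Real.log y := by
    rcases eq_or_ne y 0 with h | h
    · simp [h]
    · rw [Real.log_mul (ne_of_gt hc2) h]
      ring
  have e2 : ((c+1)*(1-y)) * Real.log ((c+1)*(1-y))
      = ((c+1)*(1-y)) * Real.log (c+1) + ((c+1)*(1-y)) * Real.log (1-y) := by
    rcases eq_or_ne y 1 with h | h
    · simp [h]
    · rw [Real.log_mul (ne_of_gt hc2) (by intro hh; apply h; linarith [sub_eq_zero.mp hh])]
      ring
  have e4 : Real.log (1/(c+1)) = - Real.log (c+1) := by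
    rw [one_div, Real.log_inv]
  have hEq : (c+1) * ((c+1) * Gf (c*Real.log c/(c-1)) (1/(c+1))
      - (Gf (c*Real.log c/(c-1)) y + c * Gf (c*Real.log c/(c-1)) ((1-y)/c)))
      = Phi c ((c+1)*y - 1) := by
    rcases eq_or_ne y 1 with h1 | h1
    · subst h1
      unfold Phi Gf
      norm_num
      have rc : (1:ℝ) + c = c + 1 := by ring
      rw [rc]
      field_simp
      ring
    · have h1y : 1 - y ≠ 0 := by intro hh; apply h1; linarith [sub_eq_zero.mp hh]
      unfold Phi Gf
      have r1 : 1 + ((c+1)*y - 1) = (c+1)*y := by ring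
      have r2 : c - ((c+1)*y - 1) = (c+1)*(1-y) := by ring
      rw [r1, r2, e1, e2, e4, Real.log_div h1y (ne_of_gt hc0)]
      field_simp
      ring
  have hX : 0 ≤ (c+1) * ((c+1) * Gf (c*Real.log c/(c-1)) (1/(c+1))
      - (Gf (c*Real.log c/(c-1)) y + c * Gf (c*Real.log c/(c-1)) ((1-y)/c))) := by
    rw [hEq]
    exact hPhi
  by_contra hcon
  push_neg at hcon
  nlinarith [hX]

lemma update2_sum {d : ℕ} (q : Fin d → ℝ) {i j : Fin d} (hij : i ≠ j) (a e : ℝ) (F : ℝ → ℝ) :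
    ∑ k, F (Function.update (Function.update q i a) j e k)
      = F a + F e - F (q i) - F (q j) + ∑ k, F (q k) := by
  classical
  have hji : j ≠ i := hij.symm
  have hsplit : ∀ v : Fin d → ℝ,
      ∑ k, v k = v i + v j + ∑ k ∈ (Finset.univ.erase i).erase j, v k := by
    intro v
    have h1 : ∑ k, v k = v i + ∑ k ∈ Finset.univ.erase i, v k :=
      (Finset.add_sum_erase _ v (Finset.mem_univ i)).symm
    have h2 : ∑ k ∈ Finset.univ.erase i, v k
        = v j + ∑ k ∈ (Finset.univ.erase i).erase j, v k :=
      (Finset.add_sum_erase _ v (Finset.mem_erase.2 ⟨hji, Finset.mem_univ j⟩)).symm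
    rw [h1, h2]
    ring
  rw [hsplit (fun k => F (Function.update (Function.update q i a) j e k)),
    hsplit (fun k => F (q k))]
  have vi : Function.update (Function.update q i a) j e i = a := by
    rw [Function.update_of_ne hij, Function.update_self]
  have vj : Function.update (Function.update q i a) j e j = e := Function.update_self _ _ _
  have hrest : ∑ k ∈ (Finset.univ.erase i).erase j,
      F (Function.update (Function.update q i a) j e k)
      = ∑ k ∈ (Finset.univ.erase i).erase j, F (q k) := by
    apply Finset.sum_congr rfl
    intro k hk
    have hkj : k ≠ j := (Finset.mem_erase.1 hk).1
    have hki : k ≠ i := (Finset.mem_erase.1 (Finset.mem_erase.1 hk).2).1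
    rw [Function.update_of_ne hkj, Function.update_of_ne hki]
  simp only [vi, vj, hrest]
  ring

lemma simplex_bound {d : ℕ} (hd : 2 < d) (p : Fin d → ℝ)
    (hp0 : ∀ k, 0 ≤ p k) (hp1 : ∑ k, p k = 1) :
    ∑ k, Gf ((((d:ℝ)-1))*Real.log ((d:ℝ)-1)/((d:ℝ)-2)) (p k)
      ≤ (d:ℝ) * Gf ((((d:ℝ)-1))*Real.log ((d:ℝ)-1)/((d:ℝ)-2)) (1/(d:ℝ)) := by
  classical
  have hd3 : (3:ℝ) ≤ (d:ℝ) := by exact_mod_cast hd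
  set c : ℝ := (d:ℝ) - 1 with hcdef
  have hc : 2 ≤ c := by rw [hcdef]; linarith
  have hc1 : (0:ℝ) < c - 1 := by linarith
  have hA : 0 < Real.log c := Real.log_pos (by linarith)
  set b : ℝ := c * Real.log c / (c-1) with hbdef
  have hb : 0 < b := by rw [hbdef]; positivity
  have hcd1 : c - 1 = (d:ℝ) - 2 := by rw [hcdef]; ring
  have hcd2 : c + 1 = (d:ℝ) := by rw [hcdef]; ring
  set τ : ℝ := 1/(2*b) with hτdef
  have hτ : 0 < τ := by rw [hτdef]; positivity
  set f : (Fin d → ℝ) → ℝ := fun v => ∑ k, Gf b (v k) with hfdef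
  have hcontf : Continuous f := by
    apply continuous_finset_sum
    exact fun i _ => (continuous_Gf b).comp (continuous_apply i)
  have hpS : p ∈ stdSimplex ℝ (Fin d) := ⟨hp0, hp1⟩
  obtain ⟨q, hqS, hqmax⟩ := (isCompact_stdSimplex ℝ (Fin d)).exists_isMaxOn ⟨p, hpS⟩
    hcontf.continuousOn
  -- general improvement contradiction
  have himp : ∀ (i j : Fin d), i ≠ j → ∀ a e : ℝ, 0 ≤ a → 0 ≤ e → a + e = q i + q j →
      Gf b (q i) + Gf b (q j) < Gf b a + Gf b e → False := by
    intro i j hij a e ha he hsum hlt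
    set q' := Function.update (Function.update q i a) j e with hq'def
    have hq'S : q' ∈ stdSimplex ℝ (Fin d) := by
      constructor
      · intro k
        rw [hq'def]
        simp only [Function.update_apply]
        split_ifs
        exacts [he, ha, hqS.1 k]
      · have hup := update2_sum q hij a e (fun x => x)
        show ∑ k, q' k = 1
        rw [hq'def, hup, hqS.2]
        linarith
    have hmax := hqmax hq'S
    have hval : f q' = Gf b a + Gf b e - Gf b (q i) - Gf b (q j) + f q :=
      update2_sum q hij a e (Gf b)
    rw [Set.mem_setOf_eq, hval] at hmax
    linarith
  -- two coordinates ≤ τ must be equal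
  have hsmall : ∀ i j : Fin d, i ≠ j → q i ≤ τ → q j ≤ τ → q i = q j := by
    have step : ∀ i j : Fin d, i ≠ j → q i ≤ τ → q j ≤ τ → q i < q j → False := by
      intro i j hij hi hj hlt
      have hcc := strictConcave_Gf hb
      have hmem_i : q i ∈ Icc (0:ℝ) (1/(2*b)) := ⟨hqS.1 i, by rw [← hτdef]; exact hi⟩
      have hmem_j : q j ∈ Icc (0:ℝ) (1/(2*b)) := ⟨hqS.1 j, by rw [← hτdef]; exact hj⟩
      have h2 := hcc.2 hmem_i hmem_j (ne_of_lt hlt) (by norm_num : (0:ℝ) < 1/2)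
        (by norm_num : (0:ℝ) < 1/2) (by norm_num)
      simp only [smul_eq_mul] at h2
      apply himp i j hij (1/2*(q i)+1/2*(q j)) (1/2*(q i)+1/2*(q j))
        (by linarith [hqS.1 i, hqS.1 j]) (by linarith [hqS.1 i, hqS.1 j]) (by ring)
      linarith
    intro i j hij hi hj
    by_contra hne2
    rcases lt_or_gt_of_ne hne2 with h | h
    · exact step i j hij hi hj h
    · exact step j i hij.symm hj hi h
  -- at most one coordinate > τ
  have hbig : ∀ i j : Fin d, i ≠ j → τ < q i → τ < q j → False := by
    have core : ∀ i j : Fin d, i ≠ j → τ < q i → τ < q j → q i ≤ q j → False := by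
      intro i j hij hi hj hle
      have hcv := strictConvex_Gf hb
      set t : ℝ := (q i - τ)/2 with htdef
      have ht : 0 < t := by rw [htdef]; linarith
      set a : ℝ := q i - t with hadef
      set e : ℝ := q j + t with hedef
      have haτ : τ ≤ a := by rw [hadef, htdef]; linarith
      have heτ : τ ≤ e := by rw [hedef]; linarith
      have hae : a < e := by rw [hadef, hedef]; linarith
      have hane : a ≠ e := ne_of_lt hae
      set lam : ℝ := (e - q i)/(e - a) with hlamdef
      have hea : 0 < e - a := by linarith
      have hlam0 : 0 < lam := by
        rw [hlamdef]
        apply div_pos _ hea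
        rw [hedef]; linarith
      have hlam1 : lam < 1 := by
        rw [hlamdef, div_lt_one hea, hadef]
        linarith
      have hidq : lam * a + (1-lam) * e = q i := by
        rw [hlamdef]
        field_simp
        ring
      have hjdq : (1-lam) * a + lam * e = q j := by
        have hsum : a + e = q i + q j := by rw [hadef, hedef]; ring
        have : (1-lam) * a + lam * e = a + e - (lam * a + (1-lam) * e) := by ring
        rw [this, hidq, hsum]
        ring
      have hmema : a ∈ Ici (1/(2*b)) := by rw [mem_Ici, ← hτdef]; exact haτ
      have hmeme : e ∈ Ici (1/(2*b)) := by rw [mem_Ici, ← hτdef]; exact heτ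
      have h1 := hcv.2 hmema hmeme hane hlam0 (by linarith : (0:ℝ) < 1 - lam) (by ring)
      simp only [smul_eq_mul] at h1
      rw [hidq] at h1
      have h2 := hcv.convexOn.2 hmema hmeme (by linarith : (0:ℝ) ≤ 1 - lam) hlam0.le
        (by ring)
      simp only [smul_eq_mul] at h2
      rw [hjdq] at h2
      apply himp i j hij a e (by linarith) (by linarith)
        (by rw [hadef, hedef]; ring)
      linarith
    intro i j hij hi hj
    rcases le_total (q i) (q j) with h | h
    · exact core i j hij hi hj h
    · exact core j i hij.symm hj hi h
  -- classification
  set Big := Finset.univ.filter (fun k => τ < q k) with hBigdef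
  have hcard : Big.card ≤ 1 := by
    rw [Finset.card_le_one]
    intro a ha b' hb'
    by_contra hne2
    exact hbig a b' hne2 (Finset.mem_filter.1 ha).2 (Finset.mem_filter.1 hb').2
  have hfp : f p ≤ f q := hqmax hpS
  have goal_eq : (d:ℝ) * Gf b (1/(d:ℝ)) = (c+1) * Gf b (1/(c+1)) := by rw [hcd2]
  rw [show (∑ k, Gf ((((d:ℝ)-1))*Real.log ((d:ℝ)-1)/((d:ℝ)-2)) (p k)) = f p by
      rw [hfdef]; apply Finset.sum_congr rfl; intro k _; rw [hbdef, hcdef, hcd1],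
    show ((d:ℝ) * Gf ((((d:ℝ)-1))*Real.log ((d:ℝ)-1)/((d:ℝ)-2)) (1/(d:ℝ)))
      = (c+1) * Gf b (1/(c+1)) by rw [hbdef, hcdef, hcd1, hcd2]]
  refine le_trans hfp ?_
  rcases Nat.le_one_iff_eq_zero_or_eq_one.1 hcard with h0 | h1
  · -- all coordinates equal, q = uniform
    have hempty : Big = ∅ := Finset.card_eq_zero.1 h0
    have hallτ : ∀ k, q k ≤ τ := by
      intro k
      by_contra hk
      push_neg at hk
      have : k ∈ Big := Finset.mem_filter.2 ⟨Finset.mem_univ k, hk⟩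
      rw [hempty] at this
      exact absurd this (Finset.notMem_empty k)
    have hdpos : 0 < d := by omega
    set k0 : Fin d := ⟨0, hdpos⟩ with hk0def
    have hall : ∀ k, q k = q k0 := by
      intro k
      rcases eq_or_ne k k0 with h | h
      · rw [h]
      · exact hsmall k k0 h (hallτ k) (hallτ k0)
    have hsumq : (d:ℝ) * q k0 = 1 := by
      have : ∑ k, q k = ∑ k : Fin d, q k0 := Finset.sum_congr rfl (fun k _ => hall k)
      rw [hqS.2] at this
      rw [Finset.sum_const, Finset.card_univ, Fintype.card_fin, nsmul_eq_mul] at this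
      linarith [this]
    have hq0 : q k0 = 1/(d:ℝ) := by
      field_simp at hsumq ⊢
      linarith
    have hfq : f q = (c+1) * Gf b (1/(c+1)) := by
      rw [hfdef]
      simp only
      rw [Finset.sum_congr rfl (fun k _ => by rw [hall k, hq0]), Finset.sum_const,
        Finset.card_univ, Fintype.card_fin, nsmul_eq_mul, hcd2]
    rw [hfq]
  · -- one big coordinate
    obtain ⟨k0, hk0⟩ := Finset.card_eq_one.1 h1
    have hyτ : τ < q k0 := by
      have : k0 ∈ Big := by rw [hk0]; exact Finset.mem_singleton_self k0
      exact (Finset.mem_filter.1 this).2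
    have hother : ∀ k, k ≠ k0 → q k ≤ τ := by
      intro k hk
      by_contra hgt
      push_neg at hgt
      have : k ∈ Big := Finset.mem_filter.2 ⟨Finset.mem_univ k, hgt⟩
      rw [hk0, Finset.mem_singleton] at this
      exact hk this
    haveI : Nontrivial (Fin d) := Fin.nontrivial_iff_two_le.2 (by omega)
    obtain ⟨k1, hk1⟩ := exists_ne k0
    set x := q k1 with hxdef
    set y := q k0 with hydef
    have hallsm : ∀ k, k ≠ k0 → q k = x := by
      intro k hk
      rcases eq_or_ne k k1 with h | h
      · rw [h]
      · exact hsmall k k1 h (hother k hk) (hother k1 hk1)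
    have hcastd : ((d - 1 : ℕ) : ℝ) = c := by
      rw [hcdef]
      have : 1 ≤ d := by omega
      push_cast [Nat.cast_sub this]
      ring
    have hsumq : y + c * x = 1 := by
      have h1' : ∑ k, q k = q k0 + ∑ k ∈ Finset.univ.erase k0, q k :=
        (Finset.add_sum_erase _ q (Finset.mem_univ k0)).symm
      have h2' : ∑ k ∈ Finset.univ.erase k0, q k = ∑ k ∈ Finset.univ.erase k0, x := by
        apply Finset.sum_congr rfl
        intro k hk
        exact hallsm k (Finset.mem_erase.1 hk).1
      rw [h2', Finset.sum_const, Finset.card_erase_of_mem (Finset.mem_univ k0),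
        Finset.card_univ, Fintype.card_fin, nsmul_eq_mul, hcastd] at h1'
      rw [hqS.2] at h1'
      linarith [h1']
    have hfq : f q = Gf b y + c * Gf b x := by
      rw [hfdef]
      simp only
      have h1' : ∑ k, Gf b (q k) = Gf b (q k0) + ∑ k ∈ Finset.univ.erase k0, Gf b (q k) :=
        (Finset.add_sum_erase _ (fun k => Gf b (q k)) (Finset.mem_univ k0)).symm
      have h2' : ∑ k ∈ Finset.univ.erase k0, Gf b (q k)
          = ∑ k ∈ Finset.univ.erase k0, Gf b x := by
        apply Finset.sum_congr rfl
        intro k hk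
        rw [hallsm k (Finset.mem_erase.1 hk).1]
      rw [h1', h2', Finset.sum_const, Finset.card_erase_of_mem (Finset.mem_univ k0),
        Finset.card_univ, Fintype.card_fin, nsmul_eq_mul, hcastd]
    have hy0 : 0 ≤ y := hqS.1 k0
    have hx0 : 0 ≤ x := hqS.1 k1
    have hy1 : y ≤ 1 := by nlinarith [hsumq, mul_nonneg (by linarith : (0:ℝ) ≤ c) hx0]
    have hxval : x = (1-y)/c := by
      rw [eq_div_iff (by linarith : c ≠ 0)]
      linarith
    rw [hfq, hxval]
    rw [hbdef]
    exact W_le_R hc hy0 hy1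

noncomputable def Psi (x : ℝ) : ℝ :=
  Real.log 2 - (2*x-1)^2/2 + x*Real.log x + (1-x)*Real.log (1-x)

noncomputable def psi1 (x : ℝ) : ℝ := Real.log x - Real.log (1-x) - 4*x + 2

lemma continuous_Psi : Continuous Psi := by
  unfold Psi
  have h1 : Continuous fun x : ℝ => x * Real.log x := Real.continuous_mul_log
  have h2 : Continuous fun x : ℝ => (1-x) * Real.log (1-x) :=
    Real.continuous_mul_log.comp (continuous_const.sub continuous_id)
  have h3 : Continuous fun x : ℝ => Real.log 2 - (2*x-1)^2/2 :=
    continuous_const.sub ((((continuous_const.mul continuous_id).sub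
      continuous_const).pow 2).div_const 2)
  exact (h3.add h1).add h2

lemma hasDerivAt_Psi {x : ℝ} (h1 : 0 < x) (h2 : x < 1) :
    HasDerivAt Psi (psi1 x) x := by
  have hx0 : x ≠ 0 := ne_of_gt h1
  have hx1 : 1 - x ≠ 0 := by intro h; apply absurd h2; push_neg; linarith [sub_eq_zero.mp h]
  have d1 : HasDerivAt (fun x : ℝ => (2*x-1)^2/2) (2*(2*x-1)) x := by
    have hin : HasDerivAt (fun x : ℝ => 2*x-1) 2 x := by
      simpa using ((hasDerivAt_id x).const_mul 2).sub_const 1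
    have := (hin.pow 2).div_const 2
    refine this.congr_deriv ?_
    push_cast
    ring
  have d2 : HasDerivAt (fun x : ℝ => x * Real.log x) (Real.log x + 1) x :=
    Real.hasDerivAt_mul_log hx0
  have d3 : HasDerivAt (fun x : ℝ => (1-x) * Real.log (1-x)) (-(Real.log (1-x) + 1)) x := by
    have := (Real.hasDerivAt_mul_log hx1).comp x ((hasDerivAt_id x).const_sub 1)
    simpa [Function.comp_def] using this
  have := ((d1.const_sub (Real.log 2)).add d2).add d3
  refine this.congr_deriv ?_
  unfold psi1
  ring

lemma hasDerivAt_psi1 {x : ℝ} (h1 : 0 < x) (h2 : x < 1) :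
    HasDerivAt psi1 (x⁻¹ + (1-x)⁻¹ - 4) x := by
  have hx0 : x ≠ 0 := ne_of_gt h1
  have hx1 : 1 - x ≠ 0 := by intro h; apply absurd h2; push_neg; linarith [sub_eq_zero.mp h]
  have d1 : HasDerivAt Real.log x⁻¹ x := Real.hasDerivAt_log hx0
  have d2 : HasDerivAt (fun x : ℝ => Real.log (1-x)) (-(1-x)⁻¹) x := by
    have := (Real.hasDerivAt_log hx1).comp x ((hasDerivAt_id x).const_sub 1)
    simpa [Function.comp_def] using this
  have d3 : HasDerivAt (fun x : ℝ => 4*x) 4 x := by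
    simpa using (hasDerivAt_id x).const_mul 4
  have := ((d1.sub d2).sub d3).add_const 2
  refine this.congr_deriv ?_
  ring

lemma psi2_nonneg {x : ℝ} (h1 : 0 < x) (h2 : x < 1) : 0 ≤ x⁻¹ + (1-x)⁻¹ - 4 := by
  have hx1 : (0:ℝ) < 1 - x := by linarith
  have key : x⁻¹ + (1-x)⁻¹ - 4 = (2*x-1)^2/(x*(1-x)) := by
    field_simp
    ring
  rw [key]
  positivity

lemma Psi_half : Psi (1/2) = 0 := by
  unfold Psi
  have h : (1:ℝ) - 1/2 = 1/2 := by norm_num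
  rw [h]
  have h2 : Real.log (1/2 : ℝ) = -Real.log 2 := by rw [one_div, Real.log_inv]
  rw [h2]
  ring

lemma psi1_half : psi1 (1/2) = 0 := by
  unfold psi1
  have h : (1:ℝ) - 1/2 = 1/2 := by norm_num
  rw [h]
  ring

lemma Psi_nonneg {x : ℝ} (hx0 : 0 ≤ x) (hx1 : x ≤ 1) : 0 ≤ Psi x := by
  have hlog2 : (1:ℝ)/2 < Real.log 2 := by
    have := Real.log_two_gt_d9
    linarith
  rcases eq_or_lt_of_le hx0 with h0 | h0
  · rw [← h0]
    unfold Psi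
    norm_num [Real.log_zero, Real.log_one]
    linarith
  rcases eq_or_lt_of_le hx1 with h1 | h1
  · rw [h1]
    unfold Psi
    norm_num [Real.log_zero, Real.log_one]
    linarith
  -- 0 < x < 1
  rcases le_total x (1/2) with hh | hh
  · -- psi1 ≤ 0 on (0, 1/2]
    have hpsi1 : ∀ z ∈ Ioo x (1/2 : ℝ), psi1 z ≤ 0 := by
      intro z hz
      have hm : MonotoneOn psi1 (Icc z (1/2)) :=
        mono_Icc (fun w hw => (hasDerivAt_psi1 (lt_of_lt_of_le (h0.trans hz.1) hw.1)
            (lt_of_le_of_lt hw.2 (by norm_num : (1:ℝ)/2 < 1))).continuousAt.continuousWithinAt)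
          (fun w hw => hasDerivAt_psi1 (lt_trans (h0.trans hz.1) hw.1)
            (lt_trans hw.2 (by norm_num : (1:ℝ)/2 < 1)))
          (fun w hw => psi2_nonneg (lt_trans (h0.trans hz.1) hw.1)
            (lt_trans hw.2 (by norm_num : (1:ℝ)/2 < 1)))
      have := hm (left_mem_Icc.2 hz.2.le) (right_mem_Icc.2 hz.2.le) hz.2.le
      rw [psi1_half] at this
      exact this
    have hanti : AntitoneOn Psi (Icc x (1/2)) :=
      anti_Icc continuous_Psi.continuousOn
        (fun w hw => hasDerivAt_Psi (lt_of_lt_of_le h0 hw.1.le)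
          (hw.2.trans (by norm_num : (1:ℝ)/2 < 1)))
        hpsi1
    have := hanti (left_mem_Icc.2 hh) (right_mem_Icc.2 hh) hh
    rw [Psi_half] at this
    exact this
  · -- psi1 ≥ 0 on [1/2, 1)
    have hpsi1 : ∀ z ∈ Ioo (1/2 : ℝ) x, 0 ≤ psi1 z := by
      intro z hz
      have hm : MonotoneOn psi1 (Icc (1/2 : ℝ) z) :=
        mono_Icc (fun w hw => (hasDerivAt_psi1 (lt_of_lt_of_le (by norm_num : (0:ℝ) < 1/2) hw.1)
            (lt_of_le_of_lt hw.2 (hz.2.trans h1))).continuousAt.continuousWithinAt)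
          (fun w hw => hasDerivAt_psi1 (lt_trans (by norm_num : (0:ℝ) < 1/2) hw.1)
            (lt_trans hw.2 (hz.2.trans h1)))
          (fun w hw => psi2_nonneg (lt_trans (by norm_num : (0:ℝ) < 1/2) hw.1)
            (lt_trans hw.2 (hz.2.trans h1)))
      have := hm (left_mem_Icc.2 hz.1.le) (right_mem_Icc.2 hz.1.le) hz.1.le
      rw [psi1_half] at this
      exact this
    have hmono : MonotoneOn Psi (Icc (1/2 : ℝ) x) :=
      mono_Icc continuous_Psi.continuousOn
        (fun w hw => hasDerivAt_Psi (lt_of_lt_of_le (by norm_num : (0:ℝ) < 1/2) hw.1.le)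
          (hw.2.trans h1))
        hpsi1
    have := hmono (left_mem_Icc.2 hh) (right_mem_Icc.2 hh) hh
    rw [Psi_half] at this
    exact this

end SRAux

open scoped BigOperators

/-- Sánchez-Ruiz per-basis entropy upper bound in terms of the index of
coincidence C = ∑ pₖ²: for d > 2, H(p) ≤ log₂ d − (d−1)(dC−1)/(d(d−2)) · log₂(d−1),
and for d = 2, H(p) ≤ 1 − (2C−1)/(2 ln 2). -/
theorem entropy_upper_bound_index_of_coincidence (d : ℕ)
    (p : Fin d → ℝ) (hp0 : ∀ k, 0 ≤ p k) (hp1 : ∑ k, p k = 1)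
    (C : ℝ) (hC : C = ∑ k, (p k) ^ 2) :
    (2 < d →
      -∑ k, p k * Real.logb 2 (p k) ≤
        Real.logb 2 d -
          (((d : ℝ) - 1) * ((d : ℝ) * C - 1)) / ((d : ℝ) * ((d : ℝ) - 2)) *
            Real.logb 2 ((d : ℝ) - 1)) ∧
    (d = 2 →
      -∑ k, p k * Real.logb 2 (p k) ≤ 1 - (2 * C - 1) / (2 * Real.log 2)) := by
  constructor
  · intro hd
    have hd3 : (3:ℝ) ≤ (d:ℝ) := by exact_mod_cast hd
    have hdpos : (0:ℝ) < d := by linarith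
    have hd2pos : (0:ℝ) < (d:ℝ) - 2 := by linarith
    have hsb := SRAux.simplex_bound hd p hp0 hp1
    set bb : ℝ := ((d:ℝ)-1) * Real.log ((d:ℝ)-1) / ((d:ℝ)-2) with hbbdef
    set S : ℝ := ∑ k, p k * Real.log (p k) with hSdef
    have hexp : ∑ k, SRAux.Gf bb (p k) = bb * C - S := by
      rw [hC, hSdef]
      unfold SRAux.Gf
      rw [Finset.sum_sub_distrib, ← Finset.mul_sum]
    have huni : (d:ℝ) * SRAux.Gf bb (1/(d:ℝ)) = bb/(d:ℝ) + Real.log d := by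
      unfold SRAux.Gf
      rw [show Real.log (1/(d:ℝ)) = -Real.log d by rw [one_div, Real.log_inv]]
      field_simp
      ring
    rw [hexp, huni] at hsb
    have hnats : -S ≤ Real.log d
        - ((d:ℝ)-1)*((d:ℝ)*C-1)/((d:ℝ)*((d:ℝ)-2)) * Real.log ((d:ℝ)-1) := by
      have heq : bb/(d:ℝ) - bb*C
          = -(((d:ℝ)-1)*((d:ℝ)*C-1)/((d:ℝ)*((d:ℝ)-2)) * Real.log ((d:ℝ)-1)) := by
        rw [hbbdef]
        field_simp
        ring
      linarith [hsb, heq]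
    have hlog2 : (0:ℝ) < Real.log 2 := Real.log_pos one_lt_two
    have hfin := mul_le_mul_of_nonneg_right hnats (inv_nonneg.2 hlog2.le)
    have e1 : -∑ k, p k * Real.logb 2 (p k) = (-S) * (Real.log 2)⁻¹ := by
      have h' : ∑ k, p k * Real.logb 2 (p k)
          = ∑ k, (p k * Real.log (p k)) * (Real.log 2)⁻¹ := by
        apply Finset.sum_congr rfl
        intro k _
        rw [Real.logb, div_eq_mul_inv]
        ring
      rw [h', ← Finset.sum_mul, ← hSdef]
      ring
    have e2 : Real.logb 2 (d:ℝ)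
        - ((d:ℝ)-1)*((d:ℝ)*C-1)/((d:ℝ)*((d:ℝ)-2)) * Real.logb 2 ((d:ℝ)-1)
        = (Real.log (d:ℝ)
          - ((d:ℝ)-1)*((d:ℝ)*C-1)/((d:ℝ)*((d:ℝ)-2)) * Real.log ((d:ℝ)-1))
            * (Real.log 2)⁻¹ := by
      rw [Real.logb, Real.logb, div_eq_mul_inv, div_eq_mul_inv]
      ring
    rw [e1, e2]
    exact hfin
  · intro hd2
    subst hd2
    have hlog2 : (0:ℝ) < Real.log 2 := Real.log_pos one_lt_two
    have h01 : p 0 + p 1 = 1 := by rw [← hp1]; exact (Fin.sum_univ_two p).symm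
    have hx1 : p 1 = 1 - p 0 := by linarith
    have hCx : 2*C - 1 = (2*(p 0)-1)^2 := by
      rw [hC, Fin.sum_univ_two, hx1]
      ring
    have hb := SRAux.Psi_nonneg (hp0 0) (by linarith [hp0 1] : p 0 ≤ 1)
    unfold SRAux.Psi at hb
    have e1 : -∑ k, p k * Real.logb 2 (p k)
        = (-(p 0 * Real.log (p 0)) - (1-p 0) * Real.log (1-p 0)) * (Real.log 2)⁻¹ := by
      rw [Fin.sum_univ_two, hx1, Real.logb, Real.logb, div_eq_mul_inv, div_eq_mul_inv]
      ring
    have e2 : 1 - (2*C-1)/(2*Real.log 2)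
        = (Real.log 2 - (2*(p 0)-1)^2/2) * (Real.log 2)⁻¹ := by
      rw [hCx]
      field_simp
    rw [e1, e2]
    apply mul_le_mul_of_nonneg_right _ (inv_nonneg.2 hlog2.le)
    linarith [hb]
end
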